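/- arXiv:2010.07280 — 7 statements merged into one kernel-verified Lean document; each statement's English description precedes it below -/
import Mathlib

section
/- Suppose two agents have identical feasibility constraints given by a family I of subsets of M, identical binary additive valuations, and I contains two complementary items both valued 1 (all other items valued 0). Then in every partition of M into two feasible bundles, one agent's envy toward the other cannot be eliminated by removing a single item: the allocation fails EF1. -/
lemma key1 {α : Type*} [DecidableEq α] (M : Finset α)
    (v : α → ℕ) (x y : α) (hxy : x ≠ y)
    (hvx : v x = 1) (hvy : v y = 1)
    (hother : ∀ g ∈ M, g ≠ x → g ≠ y → v g = 0)
    (A B : Finset α) (hd : Disjoint A B) (hu : A ∪ B = M)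
    (hxA : x ∈ A) (hyA : y ∈ A) :
    ¬ (∃ Y ⊆ A, Y.card ≤ 1 ∧ (A \ Y).sum v ≤ B.sum v) := by
  rintro ⟨Y, hYA, hYc, hle⟩
  have hB0 : B.sum v = 0 := by
    apply Finset.sum_eq_zero
    intro g hg
    have hgM : g ∈ M := hu ▸ Finset.mem_union_right _ hg
    have hgx : g ≠ x := fun h => (Finset.disjoint_left.mp hd hxA) (h ▸ hg)
    have hgy : g ≠ y := fun h => (Finset.disjoint_left.mp hd hyA) (h ▸ hg)
    exact hother g hgM hgx hgy
  -- one of x, y remains in A \ Y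
  have hrem : x ∈ A \ Y ∨ y ∈ A \ Y := by
    by_contra hc
    push_neg at hc
    have hxY : x ∈ Y := by
      by_contra h; exact hc.1 (Finset.mem_sdiff.mpr ⟨hxA, h⟩)
    have hyY : y ∈ Y := by
      by_contra h; exact hc.2 (Finset.mem_sdiff.mpr ⟨hyA, h⟩)
    have : ({x, y} : Finset α).card ≤ Y.card :=
      Finset.card_le_card (by intro g hg; simp at hg; rcases hg with rfl | rfl <;> assumption)
    rw [Finset.card_pair hxy] at this
    omega
  have h1 : 1 ≤ (A \ Y).sum v := by
    rcases hrem with h | h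
    · calc 1 = v x := hvx.symm
        _ ≤ _ := Finset.single_le_sum (fun _ _ => Nat.zero_le _) h
    · calc 1 = v y := hvy.symm
        _ ≤ _ := Finset.single_le_sum (fun _ _ => Nat.zero_le _) h
  omega

/-- Two agents with identical feasibility constraints `I`, identical binary additive
valuation `v`, and a pair of complementary items `x, y` both valued 1 while all other
items are valued 0: every partition of `M` into two feasible bundles fails EF1. -/
theorem stmt1 {α : Type*} [DecidableEq α] (M : Finset α) (I : Finset α → Prop)
    (v : α → ℕ) (hbin : ∀ g, v g ≤ 1)
    (x y : α) (hx : x ∈ M) (hy : y ∈ M) (hxy : x ≠ y)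
    (hvx : v x = 1) (hvy : v y = 1)
    (hother : ∀ g ∈ M, g ≠ x → g ≠ y → v g = 0)
    (hcompl : ∀ X1 X2 : Finset α, I X1 → I X2 → Disjoint X1 X2 → X1 ∪ X2 = M →
      ((x ∈ X1 ∧ y ∈ X1) ∨ (x ∈ X2 ∧ y ∈ X2)))
    (X1 X2 : Finset α) (h1 : I X1) (h2 : I X2)
    (hd : Disjoint X1 X2) (hu : X1 ∪ X2 = M) :
    ¬ ((∃ Y ⊆ X2, Y.card ≤ 1 ∧ (X2 \ Y).sum v ≤ X1.sum v) ∧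
       (∃ Y ⊆ X1, Y.card ≤ 1 ∧ (X1 \ Y).sum v ≤ X2.sum v)) := by
  rintro ⟨hA, hB⟩
  rcases hcompl X1 X2 h1 h2 hd hu with ⟨hx1, hy1⟩ | ⟨hx2, hy2⟩
  · exact key1 M v x y hxy hvx hvy hother X1 X2 hd hu hx1 hy1 hB
  · exact key1 M v x y hxy hvx hvy hother X2 X1 hd.symm
      (by rw [Finset.union_comm]; exact hu) hx2 hy2 hA
end

section
/- In the Capped Round Robin procedure on a single category (uniform matroid per agent with capacity k_i), if agent i precedes agent j in the picking order, then agent i's value for her own bundle is at least her feasible value for agent j's bundle: v_i(X_i) ≥ max over subsets S ⊆ X_j with |S| ≤ k_i of v_i(S). -/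
/-!
Agent `i` always takes a best remaining item, so every item still in the pool is worth (to `i`)
at most any item `i` already holds. Since `i` has a turn between any two turns of `j`, any set of
at most `k i` items of `j`'s bundle can be matched with a set of `i`'s items, no larger and of no
smaller total value: an item newly picked by `j` is matched with an item that `i` picked while the
new item was still available, and a free such item exists because `i` has kept pace with `j`.
-/

/-- The best unallocated item for a picker with valuation `w`: an item of `L` of
maximum value (ties broken by the linear order on items). -/
noncomputable def bestItem {α : Type*} [DecidableEq α] [LinearOrder α] [Inhabited α]
    (w : α → ℕ) (L : Finset α) : α :=
  if h : (L.filter (fun g => ∀ g' ∈ L, w g' ≤ w g)).Nonempty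
  then (L.filter (fun g => ∀ g' ∈ L, w g' ≤ w g)).min' h
  else default

/-- Capped Round Robin: in turn `t`, agent `σ t` picks her best remaining item unless
she has reached her capacity, in which case she is skipped; the process runs until the
pool `L` is exhausted (the `fuel` parameter only ensures termination and is taken large
enough that it never runs out). -/
noncomputable def crr {α : Type*} [DecidableEq α] [LinearOrder α] [Inhabited α] {n : ℕ}
    (k : Fin n → ℕ) (v : Fin n → α → ℕ) (σ : ℕ → Fin n) :
    ℕ → ℕ → Finset α → (Fin n → Finset α) → Fin n → Finset α
  | 0, _, _, X => X
  | fuel + 1, t, L, X =>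
    if L.Nonempty then
      if (X (σ t)).card < k (σ t) then
        crr k v σ fuel (t + 1) (L.erase (bestItem (v (σ t)) L))
          (Function.update X (σ t) (insert (bestItem (v (σ t)) L) (X (σ t))))
      else crr k v σ fuel (t + 1) L X
    else X

lemma bestItem_spec {α : Type*} [DecidableEq α] [LinearOrder α] [Inhabited α]
    (w : α → ℕ) {L : Finset α} (hL : L.Nonempty) :
    bestItem w L ∈ L ∧ ∀ a ∈ L, w a ≤ w (bestItem w L) := by
  obtain ⟨b, hb, hmax⟩ := L.exists_max_image w hL
  have hne : (L.filter fun g => ∀ g' ∈ L, w g' ≤ w g).Nonempty :=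
    ⟨b, Finset.mem_filter.mpr ⟨hb, hmax⟩⟩
  rw [bestItem, dif_pos hne]
  exact Finset.mem_filter.mp (Finset.min'_mem _ hne)

namespace Finset

variable {α β : Type*} [AddCommMonoid β] [PartialOrder β]

def Dominates (w : α → β) (c : ℕ) (A B : Finset α) : Prop :=
  ∀ S ⊆ B, #S ≤ c → ∃ T ⊆ A, #T ≤ #S ∧ ∑ x ∈ S, w x ≤ ∑ x ∈ T, w x

variable {w : α → β} {c : ℕ} {A A' B : Finset α}

theorem dominates_empty (w : α → β) (c : ℕ) (A : Finset α) : Dominates w c A ∅ := by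
  intro S hS _
  rw [subset_empty.mp hS]
  exact ⟨∅, empty_subset A, le_rfl, le_rfl⟩

theorem Dominates.mono_left (hd : Dominates w c A B) (hA : A ⊆ A') : Dominates w c A' B := by
  intro S hS hSc
  obtain ⟨T, hTA, hT⟩ := hd S hS hSc
  exact ⟨T, hTA.trans hA, hT⟩

theorem Dominates.sum_le [CanonicallyOrderedAdd β] (hd : Dominates w c A B) :
    ∀ S ⊆ B, #S ≤ c → ∑ x ∈ S, w x ≤ ∑ x ∈ A, w x := by
  intro S hS hSc
  obtain ⟨T, hTA, -, hsum⟩ := hd S hS hSc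
  exact hsum.trans (sum_le_sum_of_subset hTA)

/-- A new element of `B` that is worth no more than anything in `A` is matched with an element
of `A` left over by the matching of the old ones, which exists by the cardinality bound. -/
theorem Dominates.insert_right [DecidableEq α] [IsOrderedAddMonoid β] {b : α}
    (hd : Dominates w c A B) (hb : ∀ x ∈ A, w b ≤ w x) (hcard : min c (#B + 1) ≤ #A) :
    Dominates w c A (insert b B) := by
  intro S hS hSc
  by_cases hbS : b ∈ S
  · have hS' : S.erase b ⊆ B := subset_insert_iff.mp hS
    obtain ⟨T, hTA, hTc, hsum⟩ := hd (S.erase b) hS' ((card_erase_le).trans hSc)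
    have hSb := card_erase_add_one hbS
    have hTA' : #T < #A := by
      have := card_le_card hS'
      omega
    obtain ⟨x, hxA, hxT⟩ := exists_mem_notMem_of_card_lt_card hTA'
    refine ⟨insert x T, insert_subset hxA hTA, ?_, ?_⟩
    · rw [card_insert_of_notMem hxT]
      omega
    · calc ∑ y ∈ S, w y = w b + ∑ y ∈ S.erase b, w y := (add_sum_erase S w hbS).symm
        _ ≤ w x + ∑ y ∈ T, w y := add_le_add (hb x hxA) hsum
        _ = ∑ y ∈ insert x T, w y := (sum_insert hxT).symm
  · exact hd S ((subset_insert_iff_of_notMem hbS).mp hS) hSc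

end Finset

open Finset

/-- The invariant of Capped Round Robin seen from a pair of agents: `A` is the bundle of the
agent with valuation `w` and capacity `c`, `B` the bundle of the other agent, `L` the pool, and
`fresh` holds when the first agent has had a turn since the second one last had one. -/
structure PickInvariant {α β : Type*} [AddCommMonoid β] [PartialOrder β]
    (w : α → β) (c : ℕ) (fresh : Prop) (L A B : Finset α) : Prop where
  disjoint : Disjoint L A
  pool_le : ∀ a ∈ L, ∀ x ∈ A, w a ≤ w x
  dominates : Dominates w c A B
  card_le : min c #B ≤ #A
  card_add_one_le : fresh → min c (#B + 1) ≤ #A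

namespace PickInvariant

variable {α β : Type*} [AddCommMonoid β] [PartialOrder β]
  {w : α → β} {c : ℕ} {f f' : Prop} {L A B : Finset α}

theorem empty (w : α → β) (c : ℕ) (L : Finset α) : PickInvariant w c False L ∅ ∅ where
  disjoint := disjoint_empty_right L
  pool_le := by simp
  dominates := dominates_empty w c ∅
  card_le := by simp
  card_add_one_le := False.elim

theorem mono (h : PickInvariant w c f L A B) (hf : f' → f) : PickInvariant w c f' L A B :=
  { h with card_add_one_le := fun hf' => h.card_add_one_le (hf hf') }

theorem of_card_le (h : PickInvariant w c f L A B) (hA : c ≤ #A) : PickInvariant w c f' L A B :=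
  { h with card_add_one_le := fun _ => (min_le_left _ _).trans hA }

variable [DecidableEq α] {b : α}

theorem erase (h : PickInvariant w c f L A B) : PickInvariant w c f (L.erase b) A B :=
  { h with
    disjoint := h.disjoint.mono_left (erase_subset b L)
    pool_le := fun a ha => h.pool_le a (mem_of_mem_erase ha) }

theorem insert_left (h : PickInvariant w c f L A B) (hbL : b ∈ L) (hmax : ∀ a ∈ L, w a ≤ w b) :
    PickInvariant w c f' (L.erase b) (insert b A) B := by
  have hbA : b ∉ A := disjoint_left.mp h.disjoint hbL
  have hcard : #(insert b A) = #A + 1 := card_insert_of_notMem hbA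
  refine ⟨?_, ?_, h.dominates.mono_left (subset_insert b A), ?_, ?_⟩
  · exact disjoint_insert_right.mpr
      ⟨notMem_erase b L, h.disjoint.mono_left (erase_subset b L)⟩
  · intro a ha x hx
    rcases mem_insert.mp hx with rfl | hx
    · exact hmax a (mem_of_mem_erase ha)
    · exact h.pool_le a (mem_of_mem_erase ha) x hx
  · exact h.card_le.trans (card_le_card (subset_insert b A))
  · intro _
    have := h.card_le
    omega

theorem insert_right [IsOrderedAddMonoid β] (h : PickInvariant w c f L A B) (hbL : b ∈ L)
    (hf : f) (hf' : ¬f') : PickInvariant w c f' (L.erase b) A (insert b B) where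
  disjoint := h.disjoint.mono_left (erase_subset b L)
  pool_le := fun a ha => h.pool_le a (mem_of_mem_erase ha)
  dominates := h.dominates.insert_right (h.pool_le b hbL) (h.card_add_one_le hf)
  card_le := (min_le_min_left c (card_insert_le b B)).trans (h.card_add_one_le hf)
  card_add_one_le := fun hf'' => absurd hf'' hf'

end PickInvariant

section CappedRoundRobin

variable {α : Type*} [DecidableEq α] [LinearOrder α] [Inhabited α] {n : ℕ}
  (k : Fin n → ℕ) (v : Fin n → α → ℕ) (σ : ℕ → Fin n)

theorem crr_dominates {i j : Fin n} (hij : i ≠ j) (fresh : ℕ → Prop)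
    (hj : ∀ t, σ t = j → fresh t ∧ ¬fresh (t + 1))
    (hother : ∀ t, σ t ≠ i → σ t ≠ j → fresh (t + 1) → fresh t) :
    ∀ fuel t L X, PickInvariant (v i) (k i) (fresh t) L (X i) (X j) →
      Dominates (v i) (k i) (crr k v σ fuel t L X i) (crr k v σ fuel t L X j) := by
  intro fuel
  induction fuel with
  | zero => exact fun t L X h => h.dominates
  | succ fuel ih =>
    intro t L X h
    rw [crr]
    split_ifs with hL hcap
    · obtain ⟨hbL, hbmax⟩ := bestItem_spec (v (σ t)) hL
      apply ih
      by_cases hi : σ t = i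
      · subst hi
        rw [Function.update_self, Function.update_of_ne hij.symm]
        exact h.insert_left hbL hbmax
      by_cases hj' : σ t = j
      · subst hj'
        rw [Function.update_of_ne (Ne.symm hi), Function.update_self]
        exact h.insert_right hbL (hj t rfl).1 (hj t rfl).2
      rw [Function.update_of_ne (Ne.symm hi), Function.update_of_ne (Ne.symm hj')]
      exact h.erase.mono (hother t hi hj')
    · apply ih
      by_cases hi : σ t = i
      · subst hi
        exact h.of_card_le (not_lt.mp hcap)
      exact h.mono fun hf => if hj' : σ t = j then absurd hf (hj t hj').2 else hother t hi hj' hf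
    · exact h.dominates

end CappedRoundRobin

lemma Nat.add_one_mod_eq_zero_or (t n : ℕ) : (t + 1) % n = 0 ∨ (t + 1) % n = t % n + 1 := by
  rcases n with _ | _ | n
  · simp
  · simp [Nat.mod_one]
  · have := Nat.mod_lt t (show 0 < n + 1 + 1 by omega)
    rw [Nat.add_mod_eq_ite, Nat.mod_eq_of_lt (show 1 < n + 1 + 1 by omega)]
    split_ifs <;> omega

theorem stmt3_general {α : Type*} [DecidableEq α] [LinearOrder α] [Inhabited α] {n : ℕ}
    (hn : 0 < n) (M : Finset α) (k : Fin n → ℕ)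
    (v : Fin n → α → ℕ) (ord : Equiv.Perm (Fin n))
    (X : Fin n → Finset α)
    (hX : X = crr k v (fun t => ord ⟨t % n, Nat.mod_lt t hn⟩)
      (n * (M.card + 1)) 0 M (fun _ => ∅))
    (i j : Fin n) (hij : ord.symm i < ord.symm j) :
    ∀ S ⊆ X j, S.card ≤ k i → S.sum (v i) ≤ (X i).sum (v i) := by
  have hpq : (ord.symm i : ℕ) < ord.symm j := hij
  have hqn : (ord.symm j : ℕ) < n := (ord.symm j).isLt
  have turn_eq_iff : ∀ t a, ord ⟨t % n, Nat.mod_lt t hn⟩ = a ↔ t % n = ord.symm a := fun t a => by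
    rw [← Equiv.eq_symm_apply, Fin.ext_iff]
  subst hX
  refine Dominates.sum_le (crr_dominates k v _ (ne_of_apply_ne ord.symm hij.ne)
    (fun t => (ord.symm i : ℕ) < t % n ∧ t % n ≤ ord.symm j) ?_ ?_ _ 0 M _ ?_)
  · intro t ht
    rw [turn_eq_iff] at ht
    rcases Nat.add_one_mod_eq_zero_or t n with h | h <;> simp only [h] <;> omega
  · intro t hti htj
    rw [Ne, turn_eq_iff] at hti htj
    rcases Nat.add_one_mod_eq_zero_or t n with h | h <;> simp only [h] <;> omega
  · simpa using PickInvariant.empty (v i) (k i) M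

/-- In Capped Round Robin on a single category (agent `i` has capacity `k i`, the
picking order is given by the permutation `ord` repeated cyclically), if agent `i`
precedes agent `j` in the order, then `i`'s value for her own bundle is at least her
feasible value (over capacity-respecting subsets) of `j`'s bundle. -/
theorem stmt3 {α : Type*} [DecidableEq α] [LinearOrder α] [Inhabited α] {n : ℕ}
    (hn : 0 < n) (M : Finset α) (k : Fin n → ℕ) (hk : M.card ≤ ∑ i, k i)
    (v : Fin n → α → ℕ) (ord : Equiv.Perm (Fin n))
    (X : Fin n → Finset α)
    (hX : X = crr k v (fun t => ord ⟨t % n, Nat.mod_lt t hn⟩)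
      (n * (M.card + 1)) 0 M (fun _ => ∅))
    (i j : Fin n) (hij : ord.symm i < ord.symm j) :
    ∀ S ⊆ X j, S.card ≤ k i → S.sum (v i) ≤ (X i).sum (v i) :=
  stmt3_general hn M k v ord X hX i j hij
end

section
/- Every priority matching in a graph (with respect to any linear order on the vertices) is a maximum-cardinality matching. -/
open SimpleGraph Function

namespace Stmt8Aux
set_option linter.unusedSectionVars false
set_option maxHeartbeats 1000000

section Partner
variable {V : Type*} [Fintype V] [DecidableEq V] {G : SimpleGraph V}

variable {V : Type*} [Fintype V] [DecidableEq V] {G : SimpleGraph V}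

open Classical in
noncomputable def partner (M : G.Subgraph) (hM : M.IsMatching) (v : V) : V :=
  if h : v ∈ M.verts then (hM h).choose else v

variable {M : G.Subgraph} {hM : M.IsMatching} {v w : V}

lemma partner_adj (h : v ∈ M.verts) : M.Adj v (partner M hM v) := by
  rw [partner, dif_pos h]; exact (hM h).choose_spec.1

lemma partner_eq_of_adj (h : M.Adj v w) : partner M hM v = w := by
  have hv : v ∈ M.verts := M.edge_vert h
  rw [partner, dif_pos hv]
  exact ((hM hv).choose_spec.2 w h).symm

lemma partner_mem (h : v ∈ M.verts) : partner M hM v ∈ M.verts :=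
  M.edge_vert (partner_adj h).symm

lemma partner_ne (h : v ∈ M.verts) : partner M hM v ≠ v :=
  (M.adj_sub (partner_adj h)).ne'

lemma partner_notMem (h : v ∉ M.verts) : partner M hM v = v := dif_neg h

lemma partner_invol : Function.Involutive (partner M hM) := by
  intro v
  by_cases h : v ∈ M.verts
  · exact partner_eq_of_adj (partner_adj h).symm
  · rw [partner_notMem h, partner_notMem h]

lemma mem_iff_partner_ne : v ∈ M.verts ↔ partner M hM v ≠ v := by
  constructor
  · exact partner_ne
  · intro h; by_contra hv; exact h (partner_notMem hv)


end Partner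

section Walk


variable {V : Type*}

def walk (p q : V → V) (a : V) : ℕ → V
  | 0 => a
  | (k+1) => if Even k then p (walk p q a k) else q (walk p q a k)

variable {p q : V → V} {a : V}

lemma walk_succ (k : ℕ) : walk p q a (k+1) = if Even k then p (walk p q a k) else q (walk p q a k) := rfl

lemma walk_zero : walk p q a 0 = a := rfl

lemma walk_back (hp : Involutive p) (hq : Involutive q) (k : ℕ) :
    (if Even k then p else q) (walk p q a (k+1)) = walk p q a k := by
  by_cases h : Even k <;> simp [walk_succ, h, hp _, hq _]

/-- If the walk has not stalled before `j`, then all values up to `j` are distinct. -/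
lemma walk_no_stall_inj (hp : Involutive p) (hq : Involutive q) (hqa : q a = a) :
    ∀ j, (∀ k < j, walk p q a (k+1) ≠ walk p q a k) → ∀ i < j, walk p q a i ≠ walk p q a j := by
  intro j
  induction j using Nat.strong_induction_on with
  | _ j IH =>
    intro hns i hij heq
    obtain ⟨j', rfl⟩ : ∃ j', j = j' + 1 := ⟨j - 1, by omega⟩
    by_cases hd : j' = i
    · subst hd; exact hns j' (by omega) heq.symm
    have hij' : i < j' := by omega
    have hback : (if Even j' then p else q) (walk p q a i) = walk p q a j' := by
      rw [heq]; exact walk_back hp hq j'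
    by_cases hi : Even i <;> by_cases hj : Even j'
    · -- same parity (both even): walk j' = walk (i+1)
      have h2 : i + 1 < j' := by rw [Nat.even_iff] at hi hj; omega
      have he : walk p q a (i+1) = walk p q a j' := by
        rw [walk_succ i, if_pos hi, ← hback, if_pos hj]
      exact IH j' (by omega) (fun k hk => hns k (by omega)) (i+1) h2 he
    · -- mismatch, i even, j' odd
      cases i with
      | zero =>
        rw [if_neg hj, walk_zero, hqa] at hback
        exact hns j' (by omega) (heq.symm.trans (walk_zero.trans hback))
      | succ i'' =>
        rw [Nat.even_add_one] at hi
        have he : walk p q a i'' = walk p q a j' := by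
          have h2 := walk_back hp hq (a := a) (q := q) (p := p) i''
          rw [if_neg hi] at h2
          rw [← h2, ← hback, if_neg hj]
        exact IH j' (by omega) (fun k hk => hns k (by omega)) i'' (by omega) he
    · -- mismatch, i odd, j' even
      obtain ⟨i'', rfl⟩ : ∃ i'', i = i'' + 1 := by
        rcases Nat.eq_zero_or_pos i with h0 | h0
        · exact absurd (h0 ▸ Even.zero) hi
        · exact ⟨i - 1, by omega⟩
      rw [Nat.even_add_one, not_not] at hi
      have he : walk p q a i'' = walk p q a j' := by
        have h2 := walk_back hp hq (a := a) (q := q) (p := p) i''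
        rw [if_pos hi] at h2
        rw [← h2, ← hback, if_pos hj]
      exact IH j' (by omega) (fun k hk => hns k (by omega)) i'' (by omega) he
    · -- same parity (both odd)
      have h2 : i + 1 < j' := by
        rw [Nat.not_even_iff] at hi hj; omega
      have he : walk p q a (i+1) = walk p q a j' := by
        rw [walk_succ i, if_neg hi, ← hback, if_neg hj]
      exact IH j' (by omega) (fun k hk => hns k (by omega)) (i+1) h2 he

lemma walk_exists_stall [Finite V] (hp : Involutive p) (hq : Involutive q) (hqa : q a = a) :
    ∃ k, walk p q a (k+1) = walk p q a k := by
  by_contra h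
  push_neg at h
  obtain ⟨i, j, hne, he⟩ := Finite.exists_ne_map_eq_of_infinite (walk p q a)
  rcases hne.lt_or_gt with hlt | hlt
  · exact walk_no_stall_inj hp hq hqa j (fun k _ => h k) i hlt he
  · exact walk_no_stall_inj hp hq hqa i (fun k _ => h k) j hlt he.symm

/-- The reverse of a walk (from an even position) is a walk with the roles swapped. -/
lemma walk_reverse (hp : Involutive p) (hq : Involutive q) {m : ℕ} (hm : Even m) :
    ∀ k, k ≤ m → walk q p (walk p q a m) k = walk p q a (m - k) := by
  intro k
  induction k with
  | zero => intro _; simp only [Nat.sub_zero]; rfl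
  | succ k ih =>
    intro hk
    have hk' := ih (by omega)
    obtain ⟨d, hd⟩ : ∃ d, m - k = d + 1 := ⟨m - (k+1), by omega⟩
    have e2 : m - (k+1) = d := by omega
    have hb := walk_back hp hq (a := a) d
    rw [walk_succ, hk', hd, e2]
    rw [Nat.even_iff] at hm
    by_cases hk2 : Even k
    · have hdo : ¬ Even d := by
        rw [Nat.even_iff] at hk2 ⊢; omega
      rw [if_neg hdo] at hb
      rw [if_pos hk2]
      exact hb
    · have hde : Even d := by
        rw [Nat.not_even_iff] at hk2; rw [Nat.even_iff]; omega
      rw [if_pos hde] at hb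
      rw [if_neg hk2]
      exact hb

end Walk

section Graph
variable {V : Type*} [Fintype V] [DecidableEq V] {G : SimpleGraph V}
variable {M : G.Subgraph} {hM : M.IsMatching} {v w : V}

lemma isMatching_induce (hM : M.IsMatching) (s : Set V) (hsub : s ⊆ M.verts)
    (hcl : ∀ v ∈ s, partner M hM v ∈ s) : (M.induce s).IsMatching := by
  intro v hv
  simp only [SimpleGraph.Subgraph.induce_verts] at hv
  refine ⟨partner M hM v, ⟨hv, hcl v hv, partner_adj (hsub hv)⟩, ?_⟩
  rintro y ⟨-, -, hadj⟩
  exact (partner_eq_of_adj hadj).symm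

lemma ncard_verts_eq (hM : M.IsMatching) : M.verts.ncard = 2 * M.edgeSet.ncard := by
  classical
  have hvf : M.verts.Finite := Set.toFinite _
  have hef : M.edgeSet.Finite := Set.toFinite _
  rw [Set.ncard_eq_toFinset_card _ hvf, Set.ncard_eq_toFinset_card _ hef]
  have hmaps : ∀ x ∈ hvf.toFinset, (fun v => s(v, partner M hM v)) x ∈ hef.toFinset := by
    intro x hx
    rw [Set.Finite.mem_toFinset] at hx ⊢
    exact SimpleGraph.Subgraph.mem_edgeSet.mpr (partner_adj hx)
  rw [Finset.card_eq_sum_card_fiberwise hmaps]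
  have hfib : ∀ e ∈ hef.toFinset,
      (hvf.toFinset.filter (fun v => s(v, partner M hM v) = e)).card = 2 := by
    intro e he
    rw [Set.Finite.mem_toFinset] at he
    induction e with
    | _ x y =>
      have hxy : M.Adj x y := SimpleGraph.Subgraph.mem_edgeSet.mp he
      have hne : x ≠ y := (M.adj_sub hxy).ne
      have hfe : hvf.toFinset.filter (fun v => s(v, partner M hM v) = s(x,y)) = {x, y} := by
        ext v
        simp only [Finset.mem_filter, Set.Finite.mem_toFinset, Finset.mem_insert,
          Finset.mem_singleton]
        constructor
        · rintro ⟨hv, hs⟩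
          rw [Sym2.eq_iff] at hs
          rcases hs with ⟨h1, -⟩ | ⟨h1, -⟩
          · exact Or.inl h1
          · exact Or.inr h1
        · rintro (rfl | rfl)
          · exact ⟨M.edge_vert hxy, by rw [partner_eq_of_adj hxy]⟩
          · exact ⟨M.edge_vert hxy.symm, by rw [partner_eq_of_adj hxy.symm, Sym2.eq_swap]⟩
      rw [hfe, Finset.card_insert_of_notMem (by simp [hne]), Finset.card_singleton]
  rw [Finset.sum_congr rfl hfib, Finset.sum_const, smul_eq_mul, mul_comm]

lemma verts_le (Mu M' : G.Subgraph) (hMu : Mu.IsMatching) (hM' : M'.IsMatching)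
    (hmax : ∀ M'' : G.Subgraph, M''.IsMatching → ¬ Mu.verts ⊂ M''.verts) :
    M'.verts.ncard ≤ Mu.verts.ncard := by
  classical
  set f := partner Mu hMu with hfdef
  set g := partner M' hM' with hgdef
  have hfI : Involutive f := partner_invol
  have hgI : Involutive g := partner_invol
  have main : ∀ a ∈ M'.verts \ Mu.verts, ∃ b ∈ Mu.verts \ M'.verts,
      ∃ h : ∃ k, walk f g b (k+1) = walk f g b k, walk f g b (Nat.find h) = a := by
    rintro a ⟨haM', haMu⟩
    have hfa : f a = a := partner_notMem haMu
    have hga : g a ≠ a := partner_ne haM'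
    have hex : ∃ k, walk g f a (k+1) = walk g f a k := walk_exists_stall hgI hfI hfa
    set m := Nat.find hex with hm
    have hstall : (walk g f a) (m+1) = (walk g f a) m := Nat.find_spec hex
    have hmin : ∀ k < m, (walk g f a) (k+1) ≠ (walk g f a) k := fun k hk => Nat.find_min hex hk
    clear_value m
    have hm0 : m ≠ 0 := by
      intro h0
      apply hga
      have h1 := hstall
      rw [h0] at h1
      rw [walk_succ, if_pos Even.zero] at h1
      exact h1
    have hinj : ∀ i j, i < j → j ≤ m → (walk g f a) i ≠ (walk g f a) j := fun i j hij hjm =>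
      walk_no_stall_inj hgI hfI hfa j (fun k hk => hmin k (by omega)) i hij
    have hne : ∀ {i j : ℕ}, i ≤ m → j ≤ m → i ≠ j → (walk g f a) i ≠ (walk g f a) j := by
      intro i j him hjm hij
      rcases lt_or_gt_of_ne hij with h | h
      · exact hinj i j h hjm
      · exact (hinj j i h him).symm
    rcases Nat.even_or_odd m with hme | hmo
    · -- walk ends at a vertex matched by Mu but not M'
      refine ⟨(walk g f a) m, ⟨?_, ?_⟩, ?_⟩
      · -- (walk g f a) m ∈ Mu.verts
        obtain ⟨m', rfl⟩ : ∃ m', m = m' + 1 := ⟨m - 1, by omega⟩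
        have hodd : ¬ Even m' := by
          rcases Nat.even_iff.mp hme with h
          rw [Nat.not_even_iff]; omega
        have hstep : (walk g f a) (m'+1) = f ((walk g f a) m') := by rw [walk_succ, if_neg hodd]
        apply mem_iff_partner_ne.mpr
        rw [← hfdef]
        intro hcon
        have : f ((walk g f a) (m'+1)) = (walk g f a) m' := by rw [hstep, hfI]
        rw [hcon] at this
        exact hmin m' (by omega) (this ▸ hstep ▸ rfl : (walk g f a) (m'+1) = (walk g f a) m') |>.elim
      · -- (walk g f a) m ∉ M'.verts
        intro hcon
        apply partner_ne hcon
        rw [← hgdef]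
        have h1 := hstall
        rw [walk_succ, if_pos hme] at h1
        exact h1
      · -- reverse walk recovers a
        have hrev : ∀ k, k ≤ m → walk f g ((walk g f a) m) k = (walk g f a) (m - k) :=
          fun k hk => walk_reverse hgI hfI hme k hk
        have hstall2 : walk f g ((walk g f a) m) (m+1) = walk f g ((walk g f a) m) m := by
          rw [walk_succ, if_pos hme, hrev m le_rfl, Nat.sub_self]
          show f ((walk g f a) 0) = (walk g f a) 0
          exact hfa
        have hex2 : ∃ k, walk f g ((walk g f a) m) (k+1) = walk f g ((walk g f a) m) k := ⟨m, hstall2⟩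
        refine ⟨hex2, ?_⟩
        have hfind : Nat.find hex2 = m := by
          apply le_antisymm (Nat.find_le hstall2)
          rw [Nat.le_find_iff]
          intro k hk hcon
          rw [hrev (k+1) (by omega), hrev k (by omega)] at hcon
          have e1 : m - k = (m - (k+1)) + 1 := by omega
          rw [e1] at hcon
          exact hmin (m - (k+1)) (by omega) hcon.symm
        rw [hfind, hrev m le_rfl, Nat.sub_self]
        rfl
    · -- augmenting path: contradicts maximality
      exfalso
      set P : Set V := {v | ∃ i ≤ m, (walk g f a) i = v} with hP
      have hPa : a ∈ P := ⟨0, by omega, rfl⟩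
      have hPf : ∀ v ∈ P, f v ∈ P := by
        rintro v ⟨i, him, rfl⟩
        rcases Nat.even_or_odd i with hie | hio
        · rcases Nat.eq_zero_or_pos i with h0 | h0
          · subst h0
            exact ⟨0, by omega, hfa.symm⟩
          · obtain ⟨i', rfl⟩ : ∃ i', i = i' + 1 := ⟨i - 1, by omega⟩
            have hodd : ¬ Even i' := by rw [Nat.even_add_one] at hie; exact hie
            have hstep : (walk g f a) (i'+1) = f ((walk g f a) i') := by rw [walk_succ, if_neg hodd]
            exact ⟨i', by omega, by rw [hstep, hfI]⟩
        · rcases eq_or_lt_of_le him with h0 | h0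
          · subst h0
            have h1 := hstall
            rw [walk_succ, if_neg (Nat.not_even_iff_odd.mpr hmo)] at h1
            exact ⟨i, le_rfl, h1.symm⟩
          · have hstep : (walk g f a) (i+1) = f ((walk g f a) i) := by
              rw [walk_succ, if_neg (Nat.not_even_iff_odd.mpr hio)]
            exact ⟨i+1, by omega, hstep⟩
      have hsub2 : Mu.verts \ P ⊆ Mu.verts := Set.diff_subset
      have hcl : ∀ v ∈ Mu.verts \ P, partner Mu hMu v ∈ Mu.verts \ P := by
        rintro v ⟨hv, hvP⟩
        refine ⟨partner_mem hv, fun hc => hvP ?_⟩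
        have h2 := hPf _ hc
        rwa [hfI v] at h2
      have hN1 : (Mu.induce (Mu.verts \ P)).IsMatching := isMatching_induce hMu _ hsub2 hcl
      have hKle : ∀ k : Fin ((m+1)/2), 2 * (k : ℕ) + 1 ≤ m := by
        intro k
        have := k.2
        have hm2 : m % 2 = 1 := Nat.odd_iff.mp hmo
        omega
      have hadj : ∀ k : Fin ((m+1)/2), G.Adj ((walk g f a) (2 * (k:ℕ))) ((walk g f a) (2 * (k:ℕ) + 1)) := by
        intro k
        have hstep : (walk g f a) (2*(k:ℕ)+1) = g ((walk g f a) (2*(k:ℕ))) := by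
          rw [walk_succ, if_pos (even_two_mul _)]
        have hne2 : (walk g f a) (2*(k:ℕ)+1) ≠ (walk g f a) (2*(k:ℕ)) := hmin _ (by have := hKle k; omega)
        have hmem : (walk g f a) (2*(k:ℕ)) ∈ M'.verts := by
          apply mem_iff_partner_ne.mpr
          rw [← hgdef]
          intro hc
          exact hne2 (by rw [hstep, hc])
        have := partner_adj (hM := hM') hmem
        rw [← hgdef, ← hstep] at this
        exact M'.adj_sub this.symm |>.symm
      set N2 : G.Subgraph := ⨆ k : Fin ((m+1)/2), G.subgraphOfAdj (hadj k) with hN2def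
      have hN2 : N2.IsMatching := by
        apply SimpleGraph.Subgraph.IsMatching.iSup
          (fun k => SimpleGraph.Subgraph.IsMatching.subgraphOfAdj _)
        intro k l hkl
        apply Set.disjoint_of_subset (SimpleGraph.Subgraph.support_subset_verts _)
          (SimpleGraph.Subgraph.support_subset_verts _)
        rw [SimpleGraph.subgraphOfAdj_verts, SimpleGraph.subgraphOfAdj_verts]
        have h1 := hKle k
        have h2 := hKle l
        have hklne : (k : ℕ) ≠ (l : ℕ) := fun hc => hkl (Fin.ext hc)
        rw [Set.disjoint_iff_inter_eq_empty]
        ext x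
        simp only [Set.mem_inter_iff, Set.mem_insert_iff, Set.mem_singleton_iff,
          Set.mem_empty_iff_false, iff_false, not_and]
        rintro (rfl | rfl) (hc | hc)
        · exact hne (by omega) (by omega) (by omega) hc
        · exact hne (by omega) (by omega) (by omega) hc
        · exact hne (by omega) (by omega) (by omega) hc
        · exact hne (by omega) (by omega) (by omega) hc
      have hN2verts : N2.verts = P := by
        rw [hN2def, SimpleGraph.Subgraph.verts_iSup]
        ext v
        simp only [Set.mem_iUnion, SimpleGraph.subgraphOfAdj_verts, Set.mem_insert_iff,
          Set.mem_singleton_iff]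
        constructor
        · rintro ⟨k, (rfl | rfl)⟩
          · exact ⟨2*(k:ℕ), by have := hKle k; omega, rfl⟩
          · exact ⟨2*(k:ℕ)+1, hKle k, rfl⟩
        · rintro ⟨i, him, rfl⟩
          have hm2 : m % 2 = 1 := Nat.odd_iff.mp hmo
          refine ⟨⟨i/2, by omega⟩, ?_⟩
          rcases Nat.even_or_odd i with hie | hio
          · left
            congr 1
            show i = 2 * (i / 2)
            rw [Nat.even_iff] at hie
            omega
          · right
            congr 1
            show i = 2 * (i / 2) + 1
            rw [Nat.odd_iff] at hio
            omega
      have hdisj : Disjoint (Mu.induce (Mu.verts \ P)).support N2.support := by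
        apply Set.disjoint_of_subset (SimpleGraph.Subgraph.support_subset_verts _)
          (SimpleGraph.Subgraph.support_subset_verts _)
        rw [hN2verts, SimpleGraph.Subgraph.induce_verts]
        exact Set.disjoint_sdiff_left
      have hM'' : (Mu.induce (Mu.verts \ P) ⊔ N2).IsMatching :=
        SimpleGraph.Subgraph.IsMatching.sup hN1 hN2 hdisj
      apply hmax _ hM''
      rw [SimpleGraph.Subgraph.verts_sup, SimpleGraph.Subgraph.induce_verts, hN2verts]
      constructor
      · intro v hv
        by_cases hvP : v ∈ P
        · exact Or.inr hvP
        · exact Or.inl ⟨hv, hvP⟩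
      · intro hcon
        exact haMu (hcon (Or.inr hPa))
  -- counting
  have hAB : (M'.verts \ Mu.verts).ncard ≤ (Mu.verts \ M'.verts).ncard := by
    set F : V → V := fun a =>
      if h : ∃ b ∈ Mu.verts \ M'.verts,
          ∃ hh : ∃ k, walk f g b (k+1) = walk f g b k, walk f g b (Nat.find hh) = a
        then h.choose else a with hFdef
    have hFspec : ∀ a ∈ M'.verts \ Mu.verts, F a ∈ Mu.verts \ M'.verts ∧
        ∃ hh : ∃ k, walk f g (F a) (k+1) = walk f g (F a) k,
          walk f g (F a) (Nat.find hh) = a := by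
      intro a ha
      have h := main a ha
      rw [hFdef]
      simp only [dif_pos h]
      exact ⟨h.choose_spec.1, h.choose_spec.2⟩
    apply Set.ncard_le_ncard_of_injOn F (fun a ha => (hFspec a ha).1) ?_ (Set.toFinite _)
    intro a1 h1 a2 h2 hFeq
    obtain ⟨-, hh1, hv1⟩ := hFspec a1 h1
    obtain ⟨-, hh2, hv2⟩ := hFspec a2 h2
    revert hh1
    rw [hFeq]
    intro hh1 hv1
    have he : hh1 = hh2 := Subsingleton.elim _ _
    subst he
    rw [hv1] at hv2
    exact hv2
  have h1 : (M'.verts ∩ Mu.verts).ncard + (M'.verts \ Mu.verts).ncard = M'.verts.ncard :=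
    Set.ncard_inter_add_ncard_diff_eq_ncard _ _ (Set.toFinite _)
  have h2 : (Mu.verts ∩ M'.verts).ncard + (Mu.verts \ M'.verts).ncard = Mu.verts.ncard :=
    Set.ncard_inter_add_ncard_diff_eq_ncard _ _ (Set.toFinite _)
  rw [Set.inter_comm] at h1
  omega

end Graph
end Stmt8Aux

/-- Every priority matching (a matching whose vector of matched-vertex indicators,
listed in the priority order `σ`, is lexicographically maximum among all matchings)
is a maximum-cardinality matching. -/
theorem stmt8 {V : Type*} [Fintype V] [DecidableEq V] (G : SimpleGraph V)
    {n : ℕ} (σ : Fin n ≃ V)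
    (Mu : SimpleGraph.Subgraph G) (hMu : Mu.IsMatching)
    (hpriority : ∀ M' : SimpleGraph.Subgraph G, M'.IsMatching →
      ¬ ∃ i : Fin n, (∀ j < i, (σ j ∈ M'.verts ↔ σ j ∈ Mu.verts)) ∧
        σ i ∉ Mu.verts ∧ σ i ∈ M'.verts) :
    ∀ M' : SimpleGraph.Subgraph G, M'.IsMatching →
      M'.edgeSet.ncard ≤ Mu.edgeSet.ncard := by
  classical
  intro M' hM'
  have hmax : ∀ M'' : SimpleGraph.Subgraph G, M''.IsMatching → ¬ Mu.verts ⊂ M''.verts := by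
    intro M'' hM'' hss
    obtain ⟨v, hvM'', hvMu⟩ := Set.exists_of_ssubset hss
    set S : Finset (Fin n) := Finset.univ.filter (fun i => σ i ∈ M''.verts ∧ σ i ∉ Mu.verts)
      with hSdef
    have hSne : S.Nonempty := by
      refine ⟨σ.symm v, Finset.mem_filter.mpr ⟨Finset.mem_univ _, ?_⟩⟩
      simp only [Equiv.apply_symm_apply]
      exact ⟨hvM'', hvMu⟩
    set i := S.min' hSne with hidef
    have hiS := Finset.mem_filter.mp (S.min'_mem hSne)
    apply hpriority M'' hM''
    refine ⟨i, ?_, hiS.2.2, hiS.2.1⟩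
    intro j hj
    constructor
    · intro hjM''
      by_contra hjMu
      have hjS : j ∈ S := Finset.mem_filter.mpr ⟨Finset.mem_univ _, hjM'', hjMu⟩
      exact absurd (S.min'_le j hjS) (not_le.mpr hj)
    · intro hjMu
      exact hss.1 hjMu
  have hv := Stmt8Aux.verts_le Mu M' hMu hM' hmax
  have e1 := Stmt8Aux.ncard_verts_eq hMu
  have e2 := Stmt8Aux.ncard_verts_eq hM'
  omega
end

section
/- In Capped Round Robin on a single category with two agents, if agent 1 plays truthfully according to valuation v and agent 2 plays according to any additive valuation v', then agent 2's resulting bundle is worth (under v, subject to agent 2's capacity) at most what agent 2's bundle is worth when she also plays according to v. That is, the truthful strategy is optimal against a truthful opponent in CRR with identical values. -/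
/-- Capped Round Robin for two agents on a single category: agent `l` picks first,
then the agents alternate; agent `i` picks using her valuation `v i`, subject to her
capacity `k i`. -/
noncomputable def crr2 {α : Type*} [DecidableEq α] [LinearOrder α] [Inhabited α]
    (k : Fin 2 → ℕ) (v : Fin 2 → α → ℕ) (l : Fin 2) (M : Finset α) :
    Fin 2 → Finset α :=
  crr k v (fun t => if t % 2 = 0 then l else l + 1) (2 * (M.card + 1)) 0 M (fun _ => ∅)

/-- Feasible value of a bundle `T` under value function `v` and capacity `c`:
the maximum value of a subset of `T` of size at most `c`. -/
noncomputable def feasVal {α : Type*} [DecidableEq α] (v : α → ℕ) (c : ℕ)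
    (T : Finset α) : ℕ :=
  ((T.powerset.filter (fun S => S.card ≤ c)).image (fun S => S.sum v)).sup id

/-!
Run the truthful game and the deviating one side by side. Bundle sizes agree at every turn,
so both runs skip the same turns. Invariant: in the truthful run agent 1's items are worth
at least every pooled item, and for every threshold `θ` agent 1's bundle together with the
pool contains at least as many items of value `≥ θ` as in the deviating run. A pick by
agent 1 only moves an item from pool to bundle, which leaves these counts unchanged; a pick
by agent 0 removes from the truthful pool an item worth at most all of agent 1's items,
which is what keeps the counts ordered. At the end, agent 1's truthful bundle is the top
part of bundle plus pool, so its threshold counts dominate those of the deviating bundle: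
the sorted value vectors dominate item by item, and hence so do their best `k 1` items.
-/

open Finset Function

section CappedRoundRobin

variable {α : Type*}

section Dominance

variable {β : Type*} [AddCommMonoid β] [LinearOrder β] [IsOrderedAddMonoid β] [DecidableEq α]
  (v : α → β)

theorem exists_subset_sum_le_of_card_filter_le (S A : Finset α)
    (hA : ∀ θ, #{x ∈ S | θ ≤ v x} ≤ #{x ∈ A | θ ≤ v x}) :
    ∃ T ⊆ A, #T = #S ∧ ∑ x ∈ S, v x ≤ ∑ x ∈ T, v x := by
  induction S using Finset.induction_on_max_value v generalizing A with
  | empty => exact ⟨∅, empty_subset A, rfl, le_rfl⟩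
  | insert a S haS hmax ih =>
    obtain ⟨y, hyA, hay⟩ : ∃ y ∈ A, v a ≤ v y := by
      have ha : 0 < #{x ∈ insert a S | v a ≤ v x} :=
        card_pos.2 ⟨a, mem_filter.2 ⟨mem_insert_self a S, le_rfl⟩⟩
      obtain ⟨y, hy⟩ := card_pos.1 (ha.trans_le (hA (v a)))
      exact ⟨y, (mem_filter.1 hy).1, (mem_filter.1 hy).2⟩
    obtain ⟨T, hTA, hTcard, hTsum⟩ := ih (A.erase y) fun θ => by
      by_cases hθ : θ ≤ v a
      · have h := hA θ
        rw [filter_insert, if_pos hθ, card_insert_of_notMem fun h => haS (mem_filter.1 h).1] at h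
        rw [filter_erase, card_erase_of_mem (mem_filter.2 ⟨hyA, hθ.trans hay⟩)]
        omega
      · rw [filter_false_of_mem fun x hx h => hθ (h.trans (hmax x hx))]
        exact Nat.zero_le _
    have hyT : y ∉ T := fun h => notMem_erase y A (hTA h)
    refine ⟨insert y T, insert_subset hyA (hTA.trans (erase_subset y A)), ?_, ?_⟩
    · rw [card_insert_of_notMem hyT, card_insert_of_notMem haS, hTcard]
    · rw [sum_insert haS, sum_insert hyT]
      exact add_le_add hay hTsum

end Dominance

theorem feasVal_le_of_card_filter_le [DecidableEq α] {v : α → ℕ} (c : ℕ) {A B : Finset α}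
    (h : ∀ θ, #{x ∈ B | θ ≤ v x} ≤ #{x ∈ A | θ ≤ v x}) : feasVal v c B ≤ feasVal v c A := by
  refine Finset.sup_le fun u hu => ?_
  obtain ⟨S, hS, rfl⟩ := mem_image.1 hu
  rw [mem_filter, mem_powerset] at hS
  obtain ⟨T, hTA, hTcard, hsum⟩ := exists_subset_sum_le_of_card_filter_le v S A fun θ =>
    (card_le_card (filter_subset_filter _ hS.1)).trans (h θ)
  refine hsum.trans (le_sup (f := id) (mem_image_of_mem _ ?_))
  exact mem_filter.2 ⟨mem_powerset.2 hTA, hTcard ▸ hS.2⟩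

theorem bestItem_mem_and_le [DecidableEq α] [LinearOrder α] [Inhabited α] (w : α → ℕ)
    {L : Finset α} (hL : L.Nonempty) : bestItem w L ∈ L ∧ ∀ g ∈ L, w g ≤ w (bestItem w L) := by
  have hne : {g ∈ L | ∀ g' ∈ L, w g' ≤ w g}.Nonempty := by
    obtain ⟨a, ha, hmax⟩ := L.exists_max_image w hL
    exact ⟨a, mem_filter.2 ⟨ha, hmax⟩⟩
  rw [bestItem, dif_pos hne]
  exact mem_filter.1 (min'_mem _ hne)

section Update

variable {ι : Type*} [DecidableEq ι] [DecidableEq α]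

theorem disjoint_update_insert_erase {X : ι → Finset α} {L : Finset α}
    (hX : ∀ i, Disjoint (X i) L) (j : ι) (a : α) :
    ∀ i, Disjoint (update X j (insert a (X j)) i) (L.erase a) := by
  intro i
  rcases eq_or_ne i j with rfl | hij
  · rw [update_self, disjoint_insert_left]
    exact ⟨notMem_erase a L, (hX i).mono_right (erase_subset a L)⟩
  · rw [update_of_ne hij]
    exact (hX i).mono_right (erase_subset a L)

theorem card_update_insert_eq {X X' : ι → Finset α} (hX : ∀ i, #(X i) = #(X' i)) {j : ι}
    {a b : α} (ha : a ∉ X j) (hb : b ∉ X' j) :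
    ∀ i, #(update X j (insert a (X j)) i) = #(update X' j (insert b (X' j)) i) := by
  intro i
  rcases eq_or_ne i j with rfl | hij
  · rw [update_self, update_self, card_insert_of_notMem ha, card_insert_of_notMem hb, hX]
  · rw [update_of_ne hij, update_of_ne hij, hX]

end Update

theorem card_filter_erase_add_ite [DecidableEq α] (p : α → Prop) [DecidablePred p]
    {s : Finset α} {a : α} (ha : a ∈ s) :
    #{x ∈ s.erase a | p x} + (if p a then 1 else 0) = #{x ∈ s | p x} := by
  rw [filter_erase]
  split_ifs with hp
  · exact card_erase_add_one (mem_filter.2 ⟨ha, hp⟩)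
  · rw [erase_eq_of_notMem fun h => hp (mem_filter.1 h).2, add_zero]

theorem card_filter_insert_add_card_filter_erase [DecidableEq α] (p : α → Prop)
    [DecidablePred p] {s L : Finset α} {a : α} (has : a ∉ s) (haL : a ∈ L) :
    #{x ∈ insert a s | p x} + #{x ∈ L.erase a | p x} = #{x ∈ s | p x} + #{x ∈ L | p x} := by
  rw [← card_filter_erase_add_ite p haL, filter_insert]
  split_ifs
  · rw [card_insert_of_notMem fun h => has (mem_filter.1 h).1]
    omega
  · rfl

/-- `(L, X)` is a state (pool, bundles) of the run in which both agents pick by `v`, and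
`(L', X')` the state at the same turn of the run in which agent `1` picks by another valuation. -/
structure Coupled [DecidableEq α] (v : α → ℕ) (L L' : Finset α) (X X' : Fin 2 → Finset α) :
    Prop where
  disjoint : ∀ i, Disjoint (X i) L
  disjoint' : ∀ i, Disjoint (X' i) L'
  card_pool : #L = #L'
  card_bundle : ∀ i, #(X i) = #(X' i)
  pool_le_bundle : ∀ x ∈ X 1, ∀ y ∈ L, v y ≤ v x
  card_filter_le : ∀ θ, #{x ∈ X' 1 | θ ≤ v x} + #{x ∈ L' | θ ≤ v x} ≤
    #{x ∈ X 1 | θ ≤ v x} + #{x ∈ L | θ ≤ v x}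

namespace Coupled

variable [DecidableEq α] {v : α → ℕ} {L L' : Finset α} {X X' : Fin 2 → Finset α}

theorem init (v : α → ℕ) (M : Finset α) : Coupled v M M (fun _ => ∅) (fun _ => ∅) where
  disjoint _ := disjoint_empty_left M
  disjoint' _ := disjoint_empty_left M
  card_pool := rfl
  card_bundle _ := rfl
  pool_le_bundle _ h := absurd h (notMem_empty _)
  card_filter_le _ := le_rfl

theorem pick_zero (h : Coupled v L L' X X') {a b : α} (ha : a ∈ L) (hb : b ∈ L')
    (hb_max : ∀ y ∈ L', v y ≤ v b) :
    Coupled v (L.erase a) (L'.erase b) (update X 0 (insert a (X 0)))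
      (update X' 0 (insert b (X' 0))) where
  disjoint := disjoint_update_insert_erase h.disjoint 0 a
  disjoint' := disjoint_update_insert_erase h.disjoint' 0 b
  card_pool := by rw [card_erase_of_mem ha, card_erase_of_mem hb, h.card_pool]
  card_bundle := card_update_insert_eq h.card_bundle (disjoint_right.1 (h.disjoint 0) ha)
    (disjoint_right.1 (h.disjoint' 0) hb)
  pool_le_bundle x hx y hy := by
    rw [update_of_ne one_ne_zero] at hx
    exact h.pool_le_bundle x hx y (mem_of_mem_erase hy)
  card_filter_le θ := by
    simp only [update_of_ne (one_ne_zero : (1 : Fin 2) ≠ 0)]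
    have hdom := h.card_filter_le θ
    have hL := card_filter_erase_add_ite (θ ≤ v ·) ha
    have hL' := card_filter_erase_add_ite (θ ≤ v ·) hb
    by_cases hθb : θ ≤ v b
    · rw [if_pos hθb] at hL'
      split_ifs at hL <;> omega
    by_cases hθa : θ ≤ v a
    · have hX : #{x ∈ X 1 | θ ≤ v x} = #(X 1) :=
        congrArg card (filter_true_of_mem fun x hx => hθa.trans (h.pool_le_bundle x hx a ha))
      have hL'0 : #{x ∈ L'.erase b | θ ≤ v x} = 0 := by
        rw [card_eq_zero]
        exact filter_false_of_mem fun y hy hθy =>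
          hθb (hθy.trans (hb_max y (mem_of_mem_erase hy)))
      have hX' := Finset.card_filter_le (X' 1) (θ ≤ v ·)
      have := h.card_bundle 1
      omega
    · rw [if_neg hθa] at hL
      rw [if_neg hθb] at hL'
      omega

theorem pick_one (h : Coupled v L L' X X') {a b : α} (ha : a ∈ L)
    (ha_max : ∀ y ∈ L, v y ≤ v a) (hb : b ∈ L') :
    Coupled v (L.erase a) (L'.erase b) (update X 1 (insert a (X 1)))
      (update X' 1 (insert b (X' 1))) where
  disjoint := disjoint_update_insert_erase h.disjoint 1 a
  disjoint' := disjoint_update_insert_erase h.disjoint' 1 b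
  card_pool := by rw [card_erase_of_mem ha, card_erase_of_mem hb, h.card_pool]
  card_bundle := card_update_insert_eq h.card_bundle (disjoint_right.1 (h.disjoint 1) ha)
    (disjoint_right.1 (h.disjoint' 1) hb)
  pool_le_bundle x hx y hy := by
    rw [update_self] at hx
    rcases mem_insert.1 hx with rfl | hx
    · exact ha_max y (mem_of_mem_erase hy)
    · exact h.pool_le_bundle x hx y (mem_of_mem_erase hy)
  card_filter_le θ := by
    rw [update_self, update_self,
      card_filter_insert_add_card_filter_erase _ (disjoint_right.1 (h.disjoint 1) ha) ha,
      card_filter_insert_add_card_filter_erase _ (disjoint_right.1 (h.disjoint' 1) hb) hb]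
    exact h.card_filter_le θ

theorem card_filter_bundle_le (h : Coupled v L L' X X') (θ : ℕ) :
    #{x ∈ X' 1 | θ ≤ v x} ≤ #{x ∈ X 1 | θ ≤ v x} := by
  have hdom := h.card_filter_le θ
  by_cases hX : ∀ x ∈ X 1, θ ≤ v x
  · rw [filter_true_of_mem hX, h.card_bundle]
    exact Finset.card_filter_le _ _
  · push Not at hX
    obtain ⟨x, hx, hθx⟩ := hX
    have hL : #{y ∈ L | θ ≤ v y} = 0 := card_eq_zero.2 <|
      filter_false_of_mem fun y hy hθy => (hθy.trans (h.pool_le_bundle x hx y hy)).not_gt hθx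
    omega

variable [LinearOrder α] [Inhabited α]

theorem pick (h : Coupled v L L' X X') (v' : α → ℕ) (hL : L.Nonempty) (i : Fin 2) :
    Coupled v (L.erase (bestItem (![v, v] i) L)) (L'.erase (bestItem (![v, v'] i) L'))
      (update X i (insert (bestItem (![v, v] i) L) (X i)))
      (update X' i (insert (bestItem (![v, v'] i) L') (X' i))) := by
  have hL' : L'.Nonempty := by rw [← card_pos, ← h.card_pool]; exact card_pos.2 hL
  fin_cases i
  · exact h.pick_zero (bestItem_mem_and_le v hL).1 (bestItem_mem_and_le v hL').1
      (bestItem_mem_and_le v hL').2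
  · exact h.pick_one (bestItem_mem_and_le v hL).1 (bestItem_mem_and_le v hL).2
      (bestItem_mem_and_le v' hL').1

theorem crr_coupled (h : Coupled v L L' X X') (v' : α → ℕ) (k : Fin 2 → ℕ) (σ : ℕ → Fin 2)
    (fuel t : ℕ) :
    ∃ L₀ L₀', Coupled v L₀ L₀'
      (crr k ![v, v] σ fuel t L X) (crr k ![v, v'] σ fuel t L' X') := by
  induction fuel generalizing t L L' X X' with
  | zero => exact ⟨L, L', h⟩
  | succ fuel ih =>
    have hL' : L'.Nonempty ↔ L.Nonempty := by rw [← card_pos, ← card_pos, h.card_pool]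
    have hcap : #(X' (σ t)) < k (σ t) ↔ #(X (σ t)) < k (σ t) := by rw [h.card_bundle]
    simp only [crr, hL', hcap]
    split_ifs with hL
    · exact ih (h.pick v' hL (σ t)) (t + 1)
    · exact ih h (t + 1)
    · exact ⟨L, L', h⟩

end Coupled

end CappedRoundRobin

theorem stmt9_general {α : Type*} [DecidableEq α] [LinearOrder α] [Inhabited α]
    (M : Finset α) (k : Fin 2 → ℕ)
    (v v' : α → ℕ) (l : Fin 2) :
    feasVal v (k 1) (crr2 k ![v, v'] l M 1) ≤
      feasVal v (k 1) (crr2 k ![v, v] l M 1) := by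
  obtain ⟨_, _, h⟩ := (Coupled.init v M).crr_coupled v' k
    (fun t => if t % 2 = 0 then l else l + 1) (2 * (M.card + 1)) 0
  exact feasVal_le_of_card_filter_le (k 1) h.card_filter_bundle_le

/-- In two-agent Capped Round Robin with a common value function `v`, if agent 0 plays
truthfully (according to `v`) then, whatever the order `l`, agent 1's bundle when she
plays according to an arbitrary valuation `v'` is worth at most (under `v`, subject to
her capacity) her bundle when she also plays according to `v`: truthful play is optimal
against a truthful opponent. -/
theorem stmt9 {α : Type*} [DecidableEq α] [LinearOrder α] [Inhabited α]
    (M : Finset α) (k : Fin 2 → ℕ) (hk : M.card ≤ k 0 + k 1)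
    (v v' : α → ℕ) (l : Fin 2) :
    feasVal v (k 1) (crr2 k ![v, v'] l M 1) ≤
      feasVal v (k 1) (crr2 k ![v, v] l M 1) :=
  stmt9_general M k v v' l
end

section
/- For two agents with additive valuations and a common single category, the surplus of an agent when she plays first in Capped Round Robin is at least the negation of her surplus when she plays second: s_i(CRR with i first) ≥ −s_i(CRR with the other agent first), where s_i(X) = v_i(X_i) − (feasible value for i of X_j). -/
/-- Surplus of agent `i` in allocation `X` of a single category:
her feasible value of her own bundle minus her feasible value of the other's bundle. -/
noncomputable def surplus {α : Type*} [DecidableEq α]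
    (k : Fin 2 → ℕ) (v : Fin 2 → α → ℕ) (X : Fin 2 → Finset α) (i : Fin 2) : ℤ :=
  ((feasVal (v i) (k i) (X i) : ℕ) : ℤ) - ((feasVal (v i) (k i) (X (i + 1)) : ℕ) : ℤ)

set_option linter.unusedSectionVars false

section Lemmas
variable {α : Type*} [DecidableEq α] [LinearOrder α] [Inhabited α]

lemma bestItem_filter_nonempty (w : α → ℕ) {L : Finset α} (h : L.Nonempty) :
    (L.filter (fun g => ∀ g' ∈ L, w g' ≤ w g)).Nonempty := by
  obtain ⟨b, hb, hmax⟩ := L.exists_max_image w h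
  exact ⟨b, by simpa [Finset.mem_filter, hb] using hmax⟩

lemma bestItem_mem (w : α → ℕ) {L : Finset α} (h : L.Nonempty) : bestItem w L ∈ L := by
  have hne := bestItem_filter_nonempty w h
  rw [bestItem, dif_pos hne]
  exact Finset.mem_of_mem_filter _ (Finset.min'_mem _ hne)

lemma bestItem_le (w : α → ℕ) {L : Finset α} {y : α} (hy : y ∈ L) :
    w y ≤ w (bestItem w L) := by
  have hne := bestItem_filter_nonempty w ⟨y, hy⟩
  rw [bestItem, dif_pos hne]
  have := Finset.min'_mem _ hne
  rw [Finset.mem_filter] at this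
  exact this.2 y hy

lemma bestItem_erase (w : α → ℕ) {L : Finset α} {x : α} (h : L.Nonempty)
    (hx : x ≠ bestItem w L) : bestItem w (L.erase x) = bestItem w L := by
  set b := bestItem w L with hb
  have hbL : b ∈ L := bestItem_mem w h
  have hbmem : b ∈ L.erase x := Finset.mem_erase.mpr ⟨Ne.symm hx, hbL⟩
  have hfe : (L.erase x).filter (fun g => ∀ g' ∈ L.erase x, w g' ≤ w g)
      = (L.filter (fun g => ∀ g' ∈ L, w g' ≤ w g)).erase x := by
    ext g
    constructor
    · intro hg
      obtain ⟨hgE, hdom⟩ := Finset.mem_filter.mp hg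
      obtain ⟨hgx, hgL⟩ := Finset.mem_erase.mp hgE
      refine Finset.mem_erase.mpr ⟨hgx, Finset.mem_filter.mpr ⟨hgL, fun y hy => ?_⟩⟩
      by_cases hyx : y = x
      · subst hyx
        exact (bestItem_le w hy).trans (hdom b hbmem)
      · exact hdom y (Finset.mem_erase.mpr ⟨hyx, hy⟩)
    · intro hg
      obtain ⟨hgx, hgf⟩ := Finset.mem_erase.mp hg
      obtain ⟨hgL, hdom⟩ := Finset.mem_filter.mp hgf
      exact Finset.mem_filter.mpr ⟨Finset.mem_erase.mpr ⟨hgx, hgL⟩,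
        fun y hy => hdom y (Finset.mem_of_mem_erase hy)⟩
  have hne := bestItem_filter_nonempty w ⟨b, hbmem⟩
  rw [bestItem, dif_pos hne]
  have hbfil : b ∈ (L.filter (fun g => ∀ g' ∈ L, w g' ≤ w g)) := by
    rw [hb, bestItem, dif_pos (bestItem_filter_nonempty w h)]
    exact Finset.min'_mem _ _
  have hbfil' : b ∈ (L.erase x).filter (fun g => ∀ g' ∈ L.erase x, w g' ≤ w g) := by
    rw [hfe]; exact Finset.mem_erase.mpr ⟨Ne.symm hx, hbfil⟩
  apply le_antisymm
  · exact Finset.min'_le _ _ hbfil'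
  · apply Finset.le_min'
    intro y hy
    rw [hfe] at hy
    have : y ∈ L.filter (fun g => ∀ g' ∈ L, w g' ≤ w g) := Finset.mem_of_mem_erase hy
    rw [hb, bestItem, dif_pos (bestItem_filter_nonempty w h)]
    exact Finset.min'_le _ _ this

-- feasVal lemmas

lemma le_feasVal {v : α → ℕ} {c : ℕ} {S T : Finset α} (hS : S ⊆ T) (hc : S.card ≤ c) :
    S.sum v ≤ feasVal v c T := by
  apply Finset.le_sup (f := id) (b := S.sum v)
  exact Finset.mem_image_of_mem _ (by simp [Finset.mem_filter, Finset.mem_powerset, hS, hc])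

lemma feasVal_exists (v : α → ℕ) (c : ℕ) (T : Finset α) :
    ∃ S, S ⊆ T ∧ S.card ≤ c ∧ feasVal v c T = S.sum v := by
  have hne : (T.powerset.filter (fun S => S.card ≤ c)).Nonempty :=
    ⟨∅, by simp⟩
  obtain ⟨S, hS, hsup⟩ := Finset.exists_mem_eq_sup _ hne (fun S => S.sum v)
  rw [Finset.mem_filter, Finset.mem_powerset] at hS
  refine ⟨S, hS.1, hS.2, ?_⟩
  rw [feasVal, Finset.sup_image]
  exact hsup

lemma feasVal_zero (v : α → ℕ) (T : Finset α) : feasVal v 0 T = 0 := by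
  obtain ⟨S, _, hc, he⟩ := feasVal_exists v 0 T
  rw [he, Finset.card_eq_zero.mp (Nat.le_zero.mp hc), Finset.sum_empty]

lemma feasVal_empty (v : α → ℕ) (c : ℕ) : feasVal v c (∅ : Finset α) = 0 := by
  obtain ⟨S, hS, _, he⟩ := feasVal_exists v c ∅
  rw [he, Finset.subset_empty.mp hS, Finset.sum_empty]

lemma feasVal_le_sum (v : α → ℕ) (c : ℕ) (T : Finset α) : feasVal v c T ≤ T.sum v := by
  obtain ⟨S, hS, _, he⟩ := feasVal_exists v c T
  rw [he]
  exact Finset.sum_le_sum_of_subset hS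

lemma feasVal_of_card_le {v : α → ℕ} {c : ℕ} {T : Finset α} (h : T.card ≤ c) :
    feasVal v c T = T.sum v :=
  le_antisymm (feasVal_le_sum v c T) (le_feasVal subset_rfl h)

lemma feasVal_one_le {v : α → ℕ} {B : ℕ} {T : Finset α} (h : ∀ y ∈ T, v y ≤ B) :
    feasVal v 1 T ≤ B := by
  obtain ⟨S, hS, hc, he⟩ := feasVal_exists v 1 T
  rw [he]
  interval_cases hSc : S.card
  · rw [Finset.card_eq_zero.mp hSc, Finset.sum_empty]; exact Nat.zero_le B
  · obtain ⟨y, rfl⟩ := Finset.card_eq_one.mp hSc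
    simpa using h y (hS (Finset.mem_singleton_self y))

/-- The key "peel" lemma: removing one capacity slot costs at most `B`,
provided all but (possibly) one designated element `z` are bounded by `B`. -/
lemma feasVal_peel {v : α → ℕ} {c B : ℕ} {x z : α} {S : Finset α}
    (hc : 1 ≤ c) (hx : v x ≤ B)
    (hS : ∀ y ∈ S, v y ≤ B ∨ (2 ≤ c ∧ y = z)) :
    feasVal v c (insert x S) ≤ feasVal v (c - 1) S + B := by
  obtain ⟨T, hT, hTc, he⟩ := feasVal_exists v c (insert x S)
  rw [he]
  by_cases hxT : x ∈ T
  · have hTS : T.erase x ⊆ S := by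
      rw [← Finset.subset_insert_iff]; exact hT
    have : (T.erase x).sum v + v x = T.sum v := Finset.sum_erase_add _ _ hxT
    have hle : (T.erase x).sum v ≤ feasVal v (c - 1) S :=
      le_feasVal hTS (by rw [Finset.card_erase_of_mem hxT]; omega)
    omega
  · have hTS : T ⊆ S := by
      have := Finset.subset_insert_iff.mp hT
      rwa [Finset.erase_eq_of_notMem hxT] at this
    rcases Nat.lt_or_ge T.card c with hlt | hge
    · have : T.sum v ≤ feasVal v (c - 1) S := le_feasVal hTS (by omega)
      omega
    · have hTcc : T.card = c := le_antisymm hTc hge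
      -- find m ∈ T with v m ≤ B
      have hm : ∃ m ∈ T, v m ≤ B := by
        by_cases hall : ∀ y ∈ T, v y ≤ B
        · obtain ⟨m, hmT⟩ : T.Nonempty := Finset.card_pos.mp (by omega)
          exact ⟨m, hmT, hall m hmT⟩
        · push_neg at hall
          obtain ⟨y0, hy0, hy0B⟩ := hall
          have h2 : 2 ≤ c ∧ y0 = z := by
            rcases hS y0 (hTS hy0) with h | h
            · omega
            · exact h
          obtain ⟨m, hmT, hmne⟩ := Finset.exists_mem_ne (s := T) (by omega) y0
          rcases hS m (hTS hmT) with h | h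
          · exact ⟨m, hmT, h⟩
          · exact absurd (h.2.trans h2.2.symm) hmne
      obtain ⟨m, hmT, hmB⟩ := hm
      have : (T.erase m).sum v + v m = T.sum v := Finset.sum_erase_add _ _ hmT
      have hle : (T.erase m).sum v ≤ feasVal v (c - 1) S :=
        le_feasVal ((Finset.erase_subset _ _).trans hTS)
          (by rw [Finset.card_erase_of_mem hmT]; omega)
      omega

end Lemmas

section Run
variable {α : Type*} [DecidableEq α] [LinearOrder α] [Inhabited α]

/-- Two-agent greedy picking game: the current mover has valuation `w` and
remaining capacity `a`; the other agent has valuation `w'` and remaining capacity `b`.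
Returns (mover's picks, other's picks). -/
noncomputable def run : (α → ℕ) → (α → ℕ) → ℕ → ℕ → ℕ → Finset α → Finset α × Finset α
  | _, _, 0, _, _, _ => (∅, ∅)
  | w, w', F + 1, a, b, M =>
    if M.Nonempty then
      if a = 0 then ((run w' w F b 0 M).2, (run w' w F b 0 M).1)
      else (insert (bestItem w M) ((run w' w F b (a - 1) (M.erase (bestItem w M))).2),
            (run w' w F b (a - 1) (M.erase (bestItem w M))).1)
    else (∅, ∅)

variable (w w' : α → ℕ)

lemma run_fuel_zero (a b : ℕ) (M : Finset α) : run w w' 0 a b M = (∅, ∅) := by rw [run]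

lemma run_empty (F a b : ℕ) : run w w' F a b (∅ : Finset α) = (∅, ∅) := by
  cases F with
  | zero => rw [run]
  | succ F => rw [run]; simp

lemma run_skip {a : ℕ} (F b : ℕ) {M : Finset α} (hM : M.Nonempty) (ha : a = 0) :
    run w w' (F + 1) a b M = ((run w' w F b 0 M).2, (run w' w F b 0 M).1) := by
  rw [run, if_pos hM, if_pos ha]

lemma run_pick {a : ℕ} (F b : ℕ) {M : Finset α} (hM : M.Nonempty) (ha : a ≠ 0) :
    run w w' (F + 1) a b M =
      (insert (bestItem w M) ((run w' w F b (a - 1) (M.erase (bestItem w M))).2),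
       (run w' w F b (a - 1) (M.erase (bestItem w M))).1) := by
  rw [run, if_pos hM, if_neg ha]

lemma run_subset : ∀ (F : ℕ) (w w' : α → ℕ) (a b : ℕ) (M : Finset α),
    (run w w' F a b M).1 ⊆ M ∧ (run w w' F a b M).2 ⊆ M := by
  intro F
  induction F with
  | zero => intro w w' a b M; rw [run]; simp
  | succ F ih =>
    intro w w' a b M
    rcases M.eq_empty_or_nonempty with rfl | hM
    · rw [run_empty]; simp
    · by_cases ha : a = 0
      · rw [run_skip w w' F b hM ha]
        exact ⟨(ih w' w b 0 M).2, (ih w' w b 0 M).1⟩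
      · rw [run_pick w w' F b hM ha]
        set g := bestItem w M
        have hsub := ih w' w b (a - 1) (M.erase g)
        have hgM : g ∈ M := bestItem_mem w hM
        constructor
        · exact Finset.insert_subset hgM (hsub.2.trans (M.erase_subset g))
        · exact hsub.1.trans (M.erase_subset g)

lemma run_card : ∀ (F : ℕ) (w w' : α → ℕ) (a b : ℕ) (M : Finset α),
    (run w w' F a b M).1.card ≤ a ∧ (run w w' F a b M).2.card ≤ b := by
  intro F
  induction F with
  | zero => intro w w' a b M; rw [run]; simp
  | succ F ih =>
    intro w w' a b M
    rcases M.eq_empty_or_nonempty with rfl | hM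
    · rw [run_empty]; simp
    · by_cases ha : a = 0
      · rw [run_skip w w' F b hM ha, ha]
        exact ⟨by simpa using (ih w' w b 0 M).2, by simpa using (ih w' w b 0 M).1⟩
      · rw [run_pick w w' F b hM ha]
        have h := ih w' w b (a - 1) (M.erase (bestItem w M))
        constructor
        · calc (insert (bestItem w M) (run w' w F b (a-1) (M.erase (bestItem w M))).2).card
              ≤ _ + 1 := Finset.card_insert_le _ _
          _ ≤ a := by omega
        · exact h.1

/-- When the other agent has capacity 0, the mover takes everything. -/
lemma run_all : ∀ (n F : ℕ) (w w' : α → ℕ) (c : ℕ) (M : Finset α), M.card = n →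
    M.card ≤ c → 2 * M.card + 1 ≤ F → run w w' F c 0 M = (M, ∅) := by
  intro n
  induction n using Nat.strong_induction_on with
  | _ n ih =>
  intro F w w' c M hn hc hF
  rcases M.eq_empty_or_nonempty with rfl | hM
  · rw [run_empty]
  · have hc0 : c ≠ 0 := by have := Finset.card_pos.mpr hM; omega
    obtain ⟨F', rfl⟩ : ∃ F', F = F' + 1 := ⟨F - 1, by omega⟩
    rw [run_pick w w' F' 0 hM hc0]
    set g := bestItem w M with hg
    have hgM : g ∈ M := bestItem_mem w hM
    have hcard : (M.erase g).card = M.card - 1 := Finset.card_erase_of_mem hgM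
    rcases (M.erase g).eq_empty_or_nonempty with he | hne
    · rw [he, run_empty]
      have : M = {g} := by
        have := Finset.card_pos.mpr hM
        rw [Finset.eq_singleton_iff_unique_mem]
        refine ⟨hgM, fun y hy => ?_⟩
        by_contra hne'
        exact absurd (Finset.mem_erase.mpr ⟨hne', hy⟩) (by rw [he]; simp)
      simp [this]
    · obtain ⟨F'', rfl⟩ : ∃ F'', F' = F'' + 1 := by
        have := Finset.card_pos.mpr hne
        refine ⟨F' - 1, by omega⟩
      rw [run_skip w' w F'' (c - 1) hne rfl]
      have hrec : run w w' F'' (c - 1) 0 (M.erase g) = (M.erase g, ∅) := by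
        have hpos : 0 < M.card := Finset.card_pos.mpr hM
        have hlt : n - 1 < n := by omega
        have h1 : (M.erase g).card = n - 1 := by omega
        have h2 : (M.erase g).card ≤ c - 1 := by omega
        have h3 : 2 * (M.erase g).card + 1 ≤ F'' := by omega
        exact ih (n - 1) hlt F'' w w' (c - 1) (M.erase g) h1 h2 h3
      rw [hrec]
      simp [Finset.insert_erase hgM]

/-- When the mover has capacity 0, the other agent takes everything. -/
lemma run_none (F c : ℕ) (M : Finset α) (hc : M.card ≤ c) (hF : 2 * M.card + 2 ≤ F) :
    run w w' F 0 c M = (∅, M) := by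
  rcases M.eq_empty_or_nonempty with rfl | hM
  · rw [run_empty]
  · obtain ⟨F', rfl⟩ : ∃ F', F = F' + 1 := ⟨F - 1, by omega⟩
    have hall : run w' w F' c 0 M = (M, ∅) :=
      run_all M.card F' w' w c M rfl hc (by omega)
    rw [run_skip w w' F' c hM rfl, hall]

/-- When the mover has capacity 1: she takes her best item, the other takes the rest. -/
lemma run_one (F c : ℕ) (M : Finset α) (hM : M.Nonempty) (hc : M.card ≤ c + 1)
    (hF : 2 * M.card + 1 ≤ F) :
    run w w' F 1 c M = ({bestItem w M}, M.erase (bestItem w M)) := by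
  obtain ⟨F', rfl⟩ : ∃ F', F = F' + 1 := by
    have := Finset.card_pos.mpr hM; exact ⟨F - 1, by omega⟩
  rw [run_pick w w' F' c hM (by omega)]
  have hcard : (M.erase (bestItem w M)).card = M.card - 1 :=
    Finset.card_erase_of_mem (bestItem_mem w hM)
  have hpos : 0 < M.card := Finset.card_pos.mpr hM
  have e1 : (M.erase (bestItem w M)).card ≤ c := by omega
  have e2 : 2 * (M.erase (bestItem w M)).card + 1 ≤ F' := by omega
  have hall : run w' w F' c (1 - 1) (M.erase (bestItem w M)) = (M.erase (bestItem w M), ∅) :=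
    run_all (M.erase (bestItem w M)).card F' w' w c (M.erase (bestItem w M)) rfl e1 e2
  rw [hall]
  simp

end Run

section Bridge
variable {α : Type*} [DecidableEq α] [LinearOrder α] [Inhabited α]

lemma fin2_succ_succ (x : Fin 2) : x + 1 + 1 = x := by fin_cases x <;> decide

lemma fin2_succ_ne (x : Fin 2) : x + 1 ≠ x := by fin_cases x <;> decide

lemma crr_fuel_zero (k : Fin 2 → ℕ) (v : Fin 2 → α → ℕ) (σ : ℕ → Fin 2)
    (t : ℕ) (L : Finset α) (X : Fin 2 → Finset α) : crr k v σ 0 t L X = X := by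
  rw [crr]

lemma crr_succ (k : Fin 2 → ℕ) (v : Fin 2 → α → ℕ) (σ : ℕ → Fin 2)
    (F t : ℕ) (L : Finset α) (X : Fin 2 → Finset α) :
    crr k v σ (F + 1) t L X =
      if L.Nonempty then
        if (X (σ t)).card < k (σ t) then
          crr k v σ F (t + 1) (L.erase (bestItem (v (σ t)) L))
            (Function.update X (σ t) (insert (bestItem (v (σ t)) L) (X (σ t))))
        else crr k v σ F (t + 1) L X
      else X := by
  rw [crr]

lemma crr_run (k : Fin 2 → ℕ) (v : Fin 2 → α → ℕ) (σ : ℕ → Fin 2)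
    (hσ : ∀ t, σ (t + 1) = σ t + 1) :
    ∀ (F t : ℕ) (L : Finset α) (X : Fin 2 → Finset α), (∀ a, Disjoint (X a) L) →
      crr k v σ F t L X (σ t) = X (σ t) ∪
        (run (v (σ t)) (v (σ t + 1)) F (k (σ t) - (X (σ t)).card)
          (k (σ t + 1) - (X (σ t + 1)).card) L).1 ∧
      crr k v σ F t L X (σ t + 1) = X (σ t + 1) ∪
        (run (v (σ t)) (v (σ t + 1)) F (k (σ t) - (X (σ t)).card)
          (k (σ t + 1) - (X (σ t + 1)).card) L).2 := by
  intro F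
  induction F with
  | zero =>
    intro t L X hd
    rw [crr_fuel_zero, run_fuel_zero]
    simp
  | succ F ih =>
    intro t L X hd
    have hBA : σ t + 1 ≠ σ t := fin2_succ_ne _
    rcases L.eq_empty_or_nonempty with rfl | hL
    · rw [crr_succ, run_empty]
      simp
    · rw [crr_succ, if_pos hL]
      by_cases hcap : (X (σ t)).card < k (σ t)
      · rw [if_pos hcap]
        set g := bestItem (v (σ t)) L with hg
        have hgL : g ∈ L := bestItem_mem _ hL
        have hgX : g ∉ X (σ t) := fun h => (Finset.disjoint_left.mp (hd (σ t))) h hgL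
        set X' := Function.update X (σ t) (insert g (X (σ t))) with hX'
        have hd' : ∀ a, Disjoint (X' a) (L.erase g) := by
          intro a
          by_cases ha : a = σ t
          · subst ha
            rw [hX', Function.update_self]
            rw [Finset.disjoint_insert_left]
            exact ⟨Finset.notMem_erase _ _,
              Finset.disjoint_of_subset_right (L.erase_subset g) (hd (σ t))⟩
          · rw [hX', Function.update_of_ne ha]
            exact Finset.disjoint_of_subset_right (L.erase_subset g) (hd a)
        have hXB : X' (σ t + 1) = X (σ t + 1) := Function.update_of_ne hBA _ _
        have hXA : X' (σ t) = insert g (X (σ t)) := Function.update_self _ _ _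
        have hcX : (X' (σ t)).card = (X (σ t)).card + 1 := by
          rw [hXA, Finset.card_insert_of_notMem hgX]
        have hIH := ih (t + 1) (L.erase g) X' hd'
        rw [hσ t, fin2_succ_succ] at hIH
        have hrun : run (v (σ t)) (v (σ t + 1)) (F + 1) (k (σ t) - (X (σ t)).card)
            (k (σ t + 1) - (X (σ t + 1)).card) L =
            (insert g ((run (v (σ t + 1)) (v (σ t)) F (k (σ t + 1) - (X (σ t + 1)).card)
              (k (σ t) - (X (σ t)).card - 1) (L.erase g)).2),
             (run (v (σ t + 1)) (v (σ t)) F (k (σ t + 1) - (X (σ t + 1)).card)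
              (k (σ t) - (X (σ t)).card - 1) (L.erase g)).1) := by
          rw [run_pick _ _ _ _ hL (by omega)]
        have harg : k (σ t) - (X' (σ t)).card = k (σ t) - (X (σ t)).card - 1 := by omega
        constructor
        · rw [hIH.2, harg, hXB, hXA, hrun]
          simp [Finset.union_insert, Finset.insert_union]
        · rw [hIH.1, harg, hXB, hrun]
      · rw [if_neg hcap]
        have h0 : k (σ t) - (X (σ t)).card = 0 := by omega
        have hIH := ih (t + 1) L X hd
        rw [hσ t, fin2_succ_succ] at hIH
        have hrun : run (v (σ t)) (v (σ t + 1)) (F + 1) (k (σ t) - (X (σ t)).card)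
            (k (σ t + 1) - (X (σ t + 1)).card) L =
            ((run (v (σ t + 1)) (v (σ t)) F (k (σ t + 1) - (X (σ t + 1)).card) 0 L).2,
             (run (v (σ t + 1)) (v (σ t)) F (k (σ t + 1) - (X (σ t + 1)).card) 0 L).1) := by
          rw [run_skip _ _ _ _ hL h0]
        rw [hrun, h0] at *
        exact ⟨by rw [hIH.2, h0], by rw [hIH.1, h0]⟩

lemma crr2_run (k : Fin 2 → ℕ) (v : Fin 2 → α → ℕ) (l : Fin 2) (M : Finset α) :
    crr2 k v l M l =
      (run (v l) (v (l + 1)) (2 * (M.card + 1)) (k l) (k (l + 1)) M).1 ∧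
    crr2 k v l M (l + 1) =
      (run (v l) (v (l + 1)) (2 * (M.card + 1)) (k l) (k (l + 1)) M).2 := by
  have hσ : ∀ t, (fun t => if t % 2 = 0 then l else l + 1) (t + 1)
      = (fun t => if t % 2 = 0 then l else l + 1) t + 1 := by
    intro t
    by_cases h : t % 2 = 0
    · have h1 : (t + 1) % 2 ≠ 0 := by omega
      simp [h, h1]
    · have h1 : (t + 1) % 2 = 0 := by omega
      simp [h, h1, fin2_succ_succ]
  have hb := crr_run k v (fun t => if t % 2 = 0 then l else l + 1) hσ
    (2 * (M.card + 1)) 0 M (fun _ => ∅) (fun a => Finset.disjoint_empty_left M)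
  simp only [Nat.zero_mod, Finset.card_empty, Nat.sub_zero, Finset.empty_union,
    if_true, reduceIte] at hb
  unfold crr2
  exact hb

end Bridge

section MainAux
variable {α : Type*} [DecidableEq α] [LinearOrder α] [Inhabited α]

lemma finset_insert_comm (a b : α) (s : Finset α) :
    insert a (insert b s) = insert b (insert a s) := by
  ext x; simp [or_left_comm]

/-- The central mutual induction: "MAIN" (the surplus comparison for fresh runs) and
"AUX" (the same comparison after a common favorite item `g` has been taken by the
second player in one run and by the first player in the other). -/
lemma main_aux (w w' : α → ℕ) : ∀ (n F a b : ℕ) (M : Finset α), M.card = n →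
    ((M.card ≤ a + b → 2 * M.card + 2 ≤ F →
      ((feasVal w a (run w' w F b a M).1 : ℤ) - (((run w' w F b a M).2.sum w : ℕ) : ℤ) ≤
        (((run w w' F a b M).1.sum w : ℕ) : ℤ) - (feasVal w a (run w w' F a b M).2 : ℤ))) ∧
     (∀ g : α, 1 ≤ a → 1 ≤ b → M.card + 1 ≤ a + b → 2 * M.card + 2 ≤ F →
      (∀ y ∈ M, w y ≤ w g) →
      ((feasVal w a (insert g (run w w' F a (b - 1) M).2) : ℤ) -
          (((run w w' F a (b - 1) M).1.sum w : ℕ) : ℤ) ≤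
        (w g : ℤ) + (((run w' w F b (a - 1) M).2.sum w : ℕ) : ℤ) -
          (feasVal w a (run w' w F b (a - 1) M).1 : ℤ)))) := by
  intro n
  induction n using Nat.strong_induction_on with
  | _ n ih =>
  intro F a b M hn
  constructor
  · -- MAIN
    intro hab hF
    rcases Nat.eq_zero_or_pos a with rfl | ha
    · rw [feasVal_zero, feasVal_zero]
      have h1 : (0:ℤ) ≤ (((run w w' F 0 b M).1.sum w : ℕ) : ℤ) := Int.natCast_nonneg _
      have h2 : (0:ℤ) ≤ (((run w' w F b 0 M).2.sum w : ℕ) : ℤ) := Int.natCast_nonneg _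
      simp only [Nat.cast_zero]
      linarith
    rcases Nat.eq_zero_or_pos b with rfl | hb
    · have hI : run w w' F a 0 M = (M, ∅) :=
        run_all M.card F w w' a M rfl (by omega) (by omega)
      have hJ : run w' w F 0 a M = (∅, M) := run_none w' w F a M (by omega) (by omega)
      rw [hI, hJ]
      dsimp only
      rw [feasVal_empty]
      have h1 : (0:ℤ) ≤ ((M.sum w : ℕ) : ℤ) := Int.natCast_nonneg _
      simp only [Nat.cast_zero]
      linarith
    rcases M.eq_empty_or_nonempty with rfl | hM
    · rw [run_empty, run_empty]
      dsimp only
      rw [feasVal_empty]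
      simp
    have hpos : 0 < M.card := Finset.card_pos.mpr hM
    obtain ⟨F', rfl⟩ : ∃ F', F = F' + 1 := ⟨F - 1, by omega⟩
    have hgIM : bestItem w M ∈ M := bestItem_mem w hM
    have hgJM : bestItem w' M ∈ M := bestItem_mem w' hM
    by_cases hgg : bestItem w M = bestItem w' M
    · -- both want the same item g := bestItem w M : reduce to AUX
      have hXun := run_pick w w' F' b hM (show a ≠ 0 by omega)
      have hYun := run_pick w' w F' a hM (show b ≠ 0 by omega)
      rw [← hgg] at hYun
      rw [hXun, hYun]
      dsimp only
      have hcard1 : (M.erase (bestItem w M)).card = n - 1 := by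
        rw [Finset.card_erase_of_mem hgIM]; omega
      have hA := (ih (n - 1) (by omega) F' a b (M.erase (bestItem w M)) hcard1).2
        (bestItem w M) (by omega) (by omega) (by omega) (by omega)
        (fun y hy => bestItem_le w (Finset.mem_of_mem_erase hy))
      have hgnotin : bestItem w M ∉ (run w' w F' b (a - 1) (M.erase (bestItem w M))).2 :=
        fun h => Finset.notMem_erase _ _
          ((run_subset F' w' w b (a - 1) (M.erase (bestItem w M))).2 h)
      have hsum : (insert (bestItem w M)
          (run w' w F' b (a - 1) (M.erase (bestItem w M))).2).sum w
          = w (bestItem w M) +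
            (run w' w F' b (a - 1) (M.erase (bestItem w M))).2.sum w :=
        Finset.sum_insert hgnotin
      rw [hsum]
      push_cast
      push_cast at hA
      linarith
    · -- distinct favorite items : reduce to MAIN at (a-1, b-1)
      have hn2 : 2 ≤ M.card := Finset.one_lt_card.mpr ⟨_, hgIM, _, hgJM, hgg⟩
      obtain ⟨F'', rfl⟩ : ∃ F'', F' = F'' + 1 := ⟨F' - 1, by omega⟩
      have hM1 : (M.erase (bestItem w M)).Nonempty :=
        ⟨bestItem w' M, Finset.mem_erase.mpr ⟨fun h => hgg h.symm, hgJM⟩⟩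
      have hM2 : (M.erase (bestItem w' M)).Nonempty :=
        ⟨bestItem w M, Finset.mem_erase.mpr ⟨hgg, hgIM⟩⟩
      have hbJ : bestItem w' (M.erase (bestItem w M)) = bestItem w' M :=
        bestItem_erase w' hM hgg
      have hbI : bestItem w (M.erase (bestItem w' M)) = bestItem w M :=
        bestItem_erase w hM (fun h => hgg h.symm)
      have hMM : (M.erase (bestItem w' M)).erase (bestItem w M)
          = (M.erase (bestItem w M)).erase (bestItem w' M) := Finset.erase_right_comm
      -- X-run (i first) double unfold
      have hX1 := run_pick w w' (F'' + 1) b hM (show a ≠ 0 by omega)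
      have hX2 := run_pick w' w F'' (a - 1) hM1 (show b ≠ 0 by omega)
      rw [hbJ] at hX2
      -- Y-run (j first) double unfold
      have hY1 := run_pick w' w (F'' + 1) a hM (show b ≠ 0 by omega)
      have hY2 := run_pick w w' F'' (b - 1) hM2 (show a ≠ 0 by omega)
      rw [hbI, hMM] at hY2
      rw [hX1, hX2, hY1, hY2]
      dsimp only
      have hM''sub : (M.erase (bestItem w M)).erase (bestItem w' M) ⊆ M :=
        (Finset.erase_subset _ _).trans (Finset.erase_subset _ _)
      have hcard'' : ((M.erase (bestItem w M)).erase (bestItem w' M)).card = n - 2 := by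
        rw [Finset.card_erase_of_mem
          (Finset.mem_erase.mpr ⟨fun h => hgg h.symm, hgJM⟩),
          Finset.card_erase_of_mem hgIM]
        omega
      have hIH := (ih (n - 2) (by omega) F'' (a - 1) (b - 1)
        ((M.erase (bestItem w M)).erase (bestItem w' M)) hcard'').1 (by omega) (by omega)
      have hSsub := run_subset F'' w w' (a - 1) (b - 1)
        ((M.erase (bestItem w M)).erase (bestItem w' M))
      have hTsub := run_subset F'' w' w (b - 1) (a - 1)
        ((M.erase (bestItem w M)).erase (bestItem w' M))
      have hgInotin : bestItem w M ∉ (M.erase (bestItem w M)).erase (bestItem w' M) :=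
        fun h => Finset.notMem_erase _ _ (Finset.mem_of_mem_erase h)
      have hP1 : feasVal w a (insert (bestItem w' M)
            (run w' w F'' (b - 1) (a - 1)
              ((M.erase (bestItem w M)).erase (bestItem w' M))).1)
          ≤ feasVal w (a - 1)
              (run w' w F'' (b - 1) (a - 1)
                ((M.erase (bestItem w M)).erase (bestItem w' M))).1
            + w (bestItem w M) :=
        feasVal_peel (z := bestItem w M) (by omega) (bestItem_le w hgJM)
          (fun y hy => Or.inl (bestItem_le w (hM''sub (hTsub.1 hy))))
      have hP2 : feasVal w a (insert (bestItem w' M)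
            (run w w' F'' (a - 1) (b - 1)
              ((M.erase (bestItem w M)).erase (bestItem w' M))).2)
          ≤ feasVal w (a - 1)
              (run w w' F'' (a - 1) (b - 1)
                ((M.erase (bestItem w M)).erase (bestItem w' M))).2
            + w (bestItem w M) :=
        feasVal_peel (z := bestItem w M) (by omega) (bestItem_le w hgJM)
          (fun y hy => Or.inl (bestItem_le w (hM''sub (hSsub.2 hy))))
      have hsum1 : (insert (bestItem w M)
          (run w' w F'' (b - 1) (a - 1)
            ((M.erase (bestItem w M)).erase (bestItem w' M))).2).sum w
          = w (bestItem w M) + (run w' w F'' (b - 1) (a - 1)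
              ((M.erase (bestItem w M)).erase (bestItem w' M))).2.sum w :=
        Finset.sum_insert (fun h => hgInotin (hTsub.2 h))
      have hsum2 : (insert (bestItem w M)
          (run w w' F'' (a - 1) (b - 1)
            ((M.erase (bestItem w M)).erase (bestItem w' M))).1).sum w
          = w (bestItem w M) + (run w w' F'' (a - 1) (b - 1)
              ((M.erase (bestItem w M)).erase (bestItem w' M))).1.sum w :=
        Finset.sum_insert (fun h => hgInotin (hSsub.1 h))
      rw [hsum1, hsum2]
      have hc1 : (feasVal w a (insert (bestItem w' M)
            (run w' w F'' (b - 1) (a - 1)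
              ((M.erase (bestItem w M)).erase (bestItem w' M))).1) : ℤ)
          ≤ (feasVal w (a-1) (run w' w F'' (b - 1) (a - 1)
              ((M.erase (bestItem w M)).erase (bestItem w' M))).1 : ℤ)
            + (w (bestItem w M) : ℤ) := by exact_mod_cast hP1
      have hc2 : (feasVal w a (insert (bestItem w' M)
            (run w w' F'' (a - 1) (b - 1)
              ((M.erase (bestItem w M)).erase (bestItem w' M))).2) : ℤ)
          ≤ (feasVal w (a-1) (run w w' F'' (a - 1) (b - 1)
              ((M.erase (bestItem w M)).erase (bestItem w' M))).2 : ℤ)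
            + (w (bestItem w M) : ℤ) := by exact_mod_cast hP2
      push_cast
      push_cast at hIH
      linarith
  · -- AUX
    intro g ha hb hab hF hdom
    rcases M.eq_empty_or_nonempty with rfl | hM
    · rw [run_empty, run_empty]
      dsimp only
      have h1 : feasVal w a (insert g (∅ : Finset α)) ≤ w g := by
        calc feasVal w a (insert g ∅) ≤ (insert g (∅ : Finset α)).sum w :=
              feasVal_le_sum _ _ _
        _ = w g := by simp
      rw [feasVal_empty]
      have h1' : (feasVal w a (insert g (∅ : Finset α)) : ℤ) ≤ (w g : ℤ) := by
        exact_mod_cast h1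
      simp only [Finset.sum_empty, Nat.cast_zero]
      linarith
    have hpos : 0 < M.card := Finset.card_pos.mpr hM
    have hgIM : bestItem w M ∈ M := bestItem_mem w hM
    have hgJM : bestItem w' M ∈ M := bestItem_mem w' hM
    by_cases ha1 : a = 1
    · subst ha1
      have hX : run w' w F b (1 - 1) M = (M, ∅) :=
        run_all M.card F w' w b M rfl (by omega) (by omega)
      have hY : run w w' F 1 (b - 1) M = ({bestItem w M}, M.erase (bestItem w M)) :=
        run_one w w' F (b - 1) M hM (by omega) (by omega)
      rw [hX, hY]
      dsimp only
      have h1 : feasVal w 1 (insert g (M.erase (bestItem w M))) ≤ w g :=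
        feasVal_one_le (fun y hy => by
          rcases Finset.mem_insert.mp hy with rfl | hy'
          · exact le_refl _
          · exact hdom y (Finset.mem_of_mem_erase hy'))
      have h2 : feasVal w 1 M ≤ w (bestItem w M) :=
        feasVal_one_le (fun y hy => bestItem_le w hy)
      rw [Finset.sum_singleton, Finset.sum_empty]
      have h1' : (feasVal w 1 (insert g (M.erase (bestItem w M))) : ℤ) ≤ (w g : ℤ) := by
        exact_mod_cast h1
      have h2' : (feasVal w 1 M : ℤ) ≤ (w (bestItem w M) : ℤ) := by exact_mod_cast h2
      push_cast
      linarith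
    by_cases hb1 : b = 1
    · subst hb1
      have hY : run w w' F a (1 - 1) M = (M, ∅) :=
        run_all M.card F w w' a M rfl (by omega) (by omega)
      have hX : run w' w F 1 (a - 1) M = ({bestItem w' M}, M.erase (bestItem w' M)) :=
        run_one w' w F (a - 1) M hM (by omega) (by omega)
      rw [hX, hY]
      dsimp only
      have h1 : feasVal w a (insert g (∅ : Finset α)) ≤ w g := by
        calc feasVal w a (insert g ∅) ≤ (insert g (∅ : Finset α)).sum w :=
              feasVal_le_sum _ _ _
        _ = w g := by simp
      have h2 : feasVal w a {bestItem w' M} ≤ w (bestItem w' M) := by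
        calc feasVal w a {bestItem w' M} ≤ ({bestItem w' M} : Finset α).sum w :=
              feasVal_le_sum _ _ _
        _ = w (bestItem w' M) := by simp
      have h3 : (M.erase (bestItem w' M)).sum w + w (bestItem w' M) = M.sum w :=
        Finset.sum_erase_add _ _ hgJM
      have h1' : (feasVal w a (insert g (∅:Finset α)) : ℤ) ≤ (w g : ℤ) := by
        exact_mod_cast h1
      have h2' : (feasVal w a {bestItem w' M} : ℤ) ≤ (w (bestItem w' M) : ℤ) := by
        exact_mod_cast h2
      have h3' : (((M.erase (bestItem w' M)).sum w : ℕ) : ℤ) + (w (bestItem w' M) : ℤ)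
          = ((M.sum w : ℕ) : ℤ) := by exact_mod_cast h3
      linarith
    -- now a ≥ 2, b ≥ 2
    obtain ⟨F', rfl⟩ : ∃ F', F = F' + 1 := ⟨F - 1, by omega⟩
    by_cases hgg : bestItem w M = bestItem w' M
    · -- equal favorites: one unfold each, use MAIN at (a-1, b-1)
      have hYun := run_pick w w' F' (b - 1) hM (show a ≠ 0 by omega)
      have hXun := run_pick w' w F' (a - 1) hM (show b ≠ 0 by omega)
      rw [← hgg] at hXun
      rw [hYun, hXun]
      dsimp only
      have hcard1 : (M.erase (bestItem w M)).card = n - 1 := by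
        rw [Finset.card_erase_of_mem hgIM]; omega
      have hIH := (ih (n - 1) (by omega) F' (a - 1) (b - 1)
        (M.erase (bestItem w M)) hcard1).1 (by omega) (by omega)
      have hYsub := run_subset F' w' w (b - 1) (a - 1) (M.erase (bestItem w M))
      have hXsub := run_subset F' w w' (a - 1) (b - 1) (M.erase (bestItem w M))
      have hsub : M.erase (bestItem w M) ⊆ M := Finset.erase_subset _ _
      have hP1 : feasVal w a (insert g
            (run w' w F' (b - 1) (a - 1) (M.erase (bestItem w M))).1)
          ≤ feasVal w (a - 1)
              (run w' w F' (b - 1) (a - 1) (M.erase (bestItem w M))).1 + w g :=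
        feasVal_peel (z := g) (by omega) (le_refl _)
          (fun y hy => Or.inl (hdom y (hsub (hYsub.1 hy))))
      have hP2 : feasVal w a (insert (bestItem w M)
            (run w w' F' (a - 1) (b - 1) (M.erase (bestItem w M))).2)
          ≤ feasVal w (a - 1)
              (run w w' F' (a - 1) (b - 1) (M.erase (bestItem w M))).2
            + w (bestItem w M) :=
        feasVal_peel (z := bestItem w M) (by omega) (le_refl _)
          (fun y hy => Or.inl (bestItem_le w (hsub (hXsub.2 hy))))
      have hsum : (insert (bestItem w M)
          (run w' w F' (b - 1) (a - 1) (M.erase (bestItem w M))).2).sum w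
          = w (bestItem w M) +
            (run w' w F' (b - 1) (a - 1) (M.erase (bestItem w M))).2.sum w :=
        Finset.sum_insert (fun h => Finset.notMem_erase _ _ (hYsub.2 h))
      rw [hsum]
      have hc1 : (feasVal w a (insert g
            (run w' w F' (b - 1) (a - 1) (M.erase (bestItem w M))).1) : ℤ)
          ≤ (feasVal w (a-1)
              (run w' w F' (b - 1) (a - 1) (M.erase (bestItem w M))).1 : ℤ)
            + (w g : ℤ) := by exact_mod_cast hP1
      have hc2 : (feasVal w a (insert (bestItem w M)
            (run w w' F' (a - 1) (b - 1) (M.erase (bestItem w M))).2) : ℤ)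
          ≤ (feasVal w (a-1)
              (run w w' F' (a - 1) (b - 1) (M.erase (bestItem w M))).2 : ℤ)
            + (w (bestItem w M) : ℤ) := by exact_mod_cast hP2
      push_cast
      push_cast at hIH
      linarith
    · -- distinct favorites: two unfolds each, use AUX at (a-1, b-1)
      have hn2 : 2 ≤ M.card := Finset.one_lt_card.mpr ⟨_, hgIM, _, hgJM, hgg⟩
      obtain ⟨F'', rfl⟩ : ∃ F'', F' = F'' + 1 := ⟨F' - 1, by omega⟩
      have hM1 : (M.erase (bestItem w M)).Nonempty :=
        ⟨bestItem w' M, Finset.mem_erase.mpr ⟨fun h => hgg h.symm, hgJM⟩⟩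
      have hM2 : (M.erase (bestItem w' M)).Nonempty :=
        ⟨bestItem w M, Finset.mem_erase.mpr ⟨hgg, hgIM⟩⟩
      have hbJ : bestItem w' (M.erase (bestItem w M)) = bestItem w' M :=
        bestItem_erase w' hM hgg
      have hbI : bestItem w (M.erase (bestItem w' M)) = bestItem w M :=
        bestItem_erase w hM (fun h => hgg h.symm)
      have hMM : (M.erase (bestItem w' M)).erase (bestItem w M)
          = (M.erase (bestItem w M)).erase (bestItem w' M) := Finset.erase_right_comm
      -- Y-part double unfold
      have hY1 := run_pick w w' (F'' + 1) (b - 1) hM (show a ≠ 0 by omega)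
      have hY2 := run_pick w' w F'' (a - 1) hM1 (show b - 1 ≠ 0 by omega)
      rw [hbJ] at hY2
      -- X-part double unfold
      have hX1 := run_pick w' w (F'' + 1) (a - 1) hM (show b ≠ 0 by omega)
      have hX2 := run_pick w w' F'' (b - 1) hM2 (show a - 1 ≠ 0 by omega)
      rw [hbI, hMM] at hX2
      rw [hY1, hY2, hX1, hX2]
      dsimp only
      have hM''sub : (M.erase (bestItem w M)).erase (bestItem w' M) ⊆ M :=
        (Finset.erase_subset _ _).trans (Finset.erase_subset _ _)
      have hcard'' : ((M.erase (bestItem w M)).erase (bestItem w' M)).card = n - 2 := by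
        rw [Finset.card_erase_of_mem
          (Finset.mem_erase.mpr ⟨fun h => hgg h.symm, hgJM⟩),
          Finset.card_erase_of_mem hgIM]
        omega
      have hIH := (ih (n - 2) (by omega) F'' (a - 1) (b - 1)
        ((M.erase (bestItem w M)).erase (bestItem w' M)) hcard'').2 g
        (by omega) (by omega) (by omega) (by omega)
        (fun y hy => hdom y (hM''sub hy))
      have hQsub := run_subset F'' w w' (a - 1) (b - 1 - 1)
        ((M.erase (bestItem w M)).erase (bestItem w' M))
      have hTsub := run_subset F'' w' w (b - 1) (a - 1 - 1)
        ((M.erase (bestItem w M)).erase (bestItem w' M))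
      have hgInotin : bestItem w M ∉ (M.erase (bestItem w M)).erase (bestItem w' M) :=
        fun h => Finset.notMem_erase _ _ (Finset.mem_of_mem_erase h)
      have hP1 : feasVal w a (insert (bestItem w' M) (insert g
            (run w w' F'' (a - 1) (b - 1 - 1)
              ((M.erase (bestItem w M)).erase (bestItem w' M))).2))
          ≤ feasVal w (a - 1) (insert g
              (run w w' F'' (a - 1) (b - 1 - 1)
                ((M.erase (bestItem w M)).erase (bestItem w' M))).2)
            + w (bestItem w M) := by
        apply feasVal_peel (z := g) (by omega) (bestItem_le w hgJM)
        intro y hy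
        rcases Finset.mem_insert.mp hy with rfl | hy'
        · exact Or.inr ⟨by omega, rfl⟩
        · exact Or.inl (bestItem_le w (hM''sub (hQsub.2 hy')))
      have hP2 : feasVal w a (insert (bestItem w' M)
            (run w' w F'' (b - 1) (a - 1 - 1)
              ((M.erase (bestItem w M)).erase (bestItem w' M))).1)
          ≤ feasVal w (a - 1)
              (run w' w F'' (b - 1) (a - 1 - 1)
                ((M.erase (bestItem w M)).erase (bestItem w' M))).1
            + w (bestItem w M) :=
        feasVal_peel (z := bestItem w M) (by omega) (bestItem_le w hgJM)
          (fun y hy => Or.inl (bestItem_le w (hM''sub (hTsub.1 hy))))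
      have hsum1 : (insert (bestItem w M)
          (run w w' F'' (a - 1) (b - 1 - 1)
            ((M.erase (bestItem w M)).erase (bestItem w' M))).1).sum w
          = w (bestItem w M) + (run w w' F'' (a - 1) (b - 1 - 1)
              ((M.erase (bestItem w M)).erase (bestItem w' M))).1.sum w :=
        Finset.sum_insert (fun h => hgInotin (hQsub.1 h))
      have hsum2 : (insert (bestItem w M)
          (run w' w F'' (b - 1) (a - 1 - 1)
            ((M.erase (bestItem w M)).erase (bestItem w' M))).2).sum w
          = w (bestItem w M) + (run w' w F'' (b - 1) (a - 1 - 1)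
              ((M.erase (bestItem w M)).erase (bestItem w' M))).2.sum w :=
        Finset.sum_insert (fun h => hgInotin (hTsub.2 h))
      rw [finset_insert_comm g (bestItem w' M), hsum1, hsum2]
      have hc1 : (feasVal w a (insert (bestItem w' M) (insert g
            (run w w' F'' (a - 1) (b - 1 - 1)
              ((M.erase (bestItem w M)).erase (bestItem w' M))).2)) : ℤ)
          ≤ (feasVal w (a-1) (insert g
              (run w w' F'' (a - 1) (b - 1 - 1)
                ((M.erase (bestItem w M)).erase (bestItem w' M))).2) : ℤ)
            + (w (bestItem w M) : ℤ) := by exact_mod_cast hP1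
      have hc2 : (feasVal w a (insert (bestItem w' M)
            (run w' w F'' (b - 1) (a - 1 - 1)
              ((M.erase (bestItem w M)).erase (bestItem w' M))).1) : ℤ)
          ≤ (feasVal w (a-1)
              (run w' w F'' (b - 1) (a - 1 - 1)
                ((M.erase (bestItem w M)).erase (bestItem w' M))).1 : ℤ)
            + (w (bestItem w M) : ℤ) := by exact_mod_cast hP2
      push_cast
      push_cast at hIH
      linarith

end MainAux

/-- Surplus lemma: for two agents with additive valuations on a single category, the
surplus of an agent when she plays first in Capped Round Robin is at least the negation
of her surplus when she plays second. -/
theorem stmt11 {α : Type*} [DecidableEq α] [LinearOrder α] [Inhabited α]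
    (M : Finset α) (k : Fin 2 → ℕ) (hk : M.card ≤ k 0 + k 1)
    (v : Fin 2 → α → ℕ) (i : Fin 2) :
    -(surplus k v (crr2 k v (i + 1) M) i) ≤ surplus k v (crr2 k v i M) i := by
  have hii : i + 1 + 1 = i := fin2_succ_succ i
  have hRI := crr2_run k v i M
  have hRJ := crr2_run k v (i + 1) M
  rw [hii] at hRJ
  have hab : M.card ≤ k i + k (i + 1) := by
    have h01 : i = 0 ∨ i = 1 := by fin_cases i <;> [exact Or.inl rfl; exact Or.inr rfl]
    rcases h01 with rfl | rfl
    · have h1 : ((0 : Fin 2) + 1) = 1 := by decide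
      rw [h1]; omega
    · have h2 : ((1 : Fin 2) + 1) = 0 := by decide
      rw [h2]; omega
  have hmain := (main_aux (v i) (v (i + 1)) M.card (2 * (M.card + 1))
    (k i) (k (i + 1)) M rfl).1 hab (by omega)
  have e1 : feasVal (v i) (k i)
      (run (v i) (v (i + 1)) (2 * (M.card + 1)) (k i) (k (i + 1)) M).1
      = (run (v i) (v (i + 1)) (2 * (M.card + 1)) (k i) (k (i + 1)) M).1.sum (v i) :=
    feasVal_of_card_le (run_card _ _ _ _ _ M).1
  have e2 : feasVal (v i) (k i)
      (run (v (i + 1)) (v i) (2 * (M.card + 1)) (k (i + 1)) (k i) M).2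
      = (run (v (i + 1)) (v i) (2 * (M.card + 1)) (k (i + 1)) (k i) M).2.sum (v i) :=
    feasVal_of_card_le (run_card _ _ _ _ _ M).2
  unfold surplus
  rw [hRI.1, hRI.2, hRJ.1, hRJ.2, e1, e2]
  linarith [hmain]
end

section
/- Let M be a base-orderable matroid, and let its free extension M' be formed by adding a new element e0, with independent sets I' = I ∪ {I + e0 : I ∈ I, |I| ≤ rank(M) − 1}. Then M' is also base-orderable. Conversely, if M' is base-orderable, so is M. -/
/-- The independence predicate of the free extension of a matroid with independence
predicate `Indep` and rank `r`, obtained by adding the new element `e0`. -/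
def freeExtIndep {α : Type*} [DecidableEq α] (Indep : Finset α → Prop)
    (r : ℕ) (e0 : α) : Finset α → Prop :=
  fun S => (e0 ∉ S ∧ Indep S) ∨
    (e0 ∈ S ∧ Indep (S.erase e0) ∧ (S.erase e0).card ≤ r - 1)

/-- `B` is a base: an independent set that is maximal within the ground set `E`. -/
def IsBaseOf {α : Type*} [DecidableEq α] (E : Finset α) (Indep : Finset α → Prop)
    (B : Finset α) : Prop :=
  Indep B ∧ ∀ g ∈ E, g ∉ B → ¬ Indep (insert g B)

/-- A matroid is base-orderable if every two bases admit a feasible-exchange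
bijection. -/
def BaseOrderable {α : Type*} [DecidableEq α] (E : Finset α)
    (Indep : Finset α → Prop) : Prop :=
  ∀ B1 B2 : Finset α, IsBaseOf E Indep B1 → IsBaseOf E Indep B2 →
    ∃ μ : α → α, Set.BijOn μ ↑B1 ↑B2 ∧
      ∀ x ∈ B1, Indep (insert (μ x) (B1.erase x)) ∧ Indep (insert x (B2.erase (μ x)))

section Aux

variable {α : Type*} [DecidableEq α] {E : Finset α} {Indep : Finset α → Prop} {r : ℕ} {e0 : α}

/-- One-step extension of a non-maximal independent set. -/
theorem fe_ext_one
    (subset_ground : ∀ S, Indep S → S ⊆ E)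
    (indep_aug : ∀ ⦃S T : Finset α⦄, Indep S → Indep T → S.card < T.card →
      ∃ g ∈ T, g ∉ S ∧ Indep (insert g S))
    (hr_ex : ∃ B, Indep B ∧ B.card = r)
    {I : Finset α} (hI : Indep I) (hcard : I.card < r) :
    ∃ g ∈ E, g ∉ I ∧ Indep (insert g I) := by
  obtain ⟨B0, hB0, hc0⟩ := hr_ex
  obtain ⟨g, hgB, hgI, hind⟩ := indep_aug hI hB0 (by omega)
  exact ⟨g, subset_ground B0 hB0 hgB, hgI, hind⟩

/-- An independent set of maximal cardinality is a base. -/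
theorem fe_base_of_card
    (hr_le : ∀ S, Indep S → S.card ≤ r)
    {B : Finset α} (hB : Indep B) (hc : B.card = r) : IsBaseOf E Indep B := by
  refine ⟨hB, fun g hgE hgB hind => ?_⟩
  have h := hr_le _ hind
  rw [Finset.card_insert_of_notMem hgB] at h
  omega

/-- Every base has cardinality `r`. -/
theorem fe_base_card
    (subset_ground : ∀ S, Indep S → S ⊆ E)
    (indep_aug : ∀ ⦃S T : Finset α⦄, Indep S → Indep T → S.card < T.card →
      ∃ g ∈ T, g ∉ S ∧ Indep (insert g S))
    (hr_le : ∀ S, Indep S → S.card ≤ r)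
    (hr_ex : ∃ B, Indep B ∧ B.card = r)
    {B : Finset α} (hB : IsBaseOf E Indep B) : B.card = r := by
  rcases lt_or_ge B.card r with h | h
  · obtain ⟨g, hgE, hgI, hind⟩ := fe_ext_one subset_ground indep_aug hr_ex hB.1 h
    exact absurd hind (hB.2 g hgE hgI)
  · exact le_antisymm (hr_le B hB.1) h

/-- A base of `M` is a base of the free extension (when `r ≥ 1`). -/
theorem fe_baseExt_of_base
    (subset_ground : ∀ S, Indep S → S ⊆ E)
    (indep_aug : ∀ ⦃S T : Finset α⦄, Indep S → Indep T → S.card < T.card →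
      ∃ g ∈ T, g ∉ S ∧ Indep (insert g S))
    (hr_le : ∀ S, Indep S → S.card ≤ r)
    (hr_ex : ∃ B, Indep B ∧ B.card = r)
    (he0 : e0 ∉ E) (hr1 : 1 ≤ r)
    {B : Finset α} (hB : IsBaseOf E Indep B) :
    IsBaseOf (insert e0 E) (freeExtIndep Indep r e0) B := by
  have hBE : B ⊆ E := subset_ground B hB.1
  have he0B : e0 ∉ B := fun h => he0 (hBE h)
  have hcard : B.card = r := fe_base_card subset_ground indep_aug hr_le hr_ex hB
  refine ⟨Or.inl ⟨he0B, hB.1⟩, fun g hgE hgB hind => ?_⟩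
  rcases Finset.mem_insert.mp hgE with rfl | hgE'
  · rcases hind with ⟨hne, _⟩ | ⟨_, _, hc⟩
    · exact hne (Finset.mem_insert_self _ _)
    · rw [Finset.erase_insert he0B] at hc
      omega
  · have hge0 : g ≠ e0 := fun h => he0 (h ▸ hgE')
    rcases hind with ⟨_, hi⟩ | ⟨hmem, _, _⟩
    · exact hB.2 g hgE' hgB hi
    · rcases Finset.mem_insert.mp hmem with h | h
      · exact hge0 h.symm
      · exact he0B h


/-- A base of the free extension not containing `e0` is a base of `M`. -/
theorem fe_base_of_baseExt
    (he0 : e0 ∉ E)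
    {B : Finset α} (hB : IsBaseOf (insert e0 E) (freeExtIndep Indep r e0) B)
    (he0B : e0 ∉ B) : IsBaseOf E Indep B := by
  have hBi : Indep B := by
    rcases hB.1 with ⟨_, hi⟩ | ⟨hmem, _, _⟩
    · exact hi
    · exact absurd hmem he0B
  refine ⟨hBi, fun g hgE hgB hind => ?_⟩
  have hge0 : g ≠ e0 := fun h => he0 (h ▸ hgE)
  refine hB.2 g (Finset.mem_insert_of_mem hgE) hgB (Or.inl ⟨?_, hind⟩)
  intro h
  rcases Finset.mem_insert.mp h with h' | h'
  · exact hge0 h'.symm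
  · exact he0B h'

/-- A base of the free extension containing `e0` is `e0` plus an independent set of
cardinality `r - 1`. -/
theorem fe_baseExt_erase
    (subset_ground : ∀ S, Indep S → S ⊆ E)
    (indep_aug : ∀ ⦃S T : Finset α⦄, Indep S → Indep T → S.card < T.card →
      ∃ g ∈ T, g ∉ S ∧ Indep (insert g S))
    (hr_ex : ∃ B, Indep B ∧ B.card = r)
    (he0 : e0 ∉ E)
    {B : Finset α} (hB : IsBaseOf (insert e0 E) (freeExtIndep Indep r e0) B)
    (he0B : e0 ∈ B) : Indep (B.erase e0) ∧ (B.erase e0).card = r - 1 := by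
  obtain ⟨hind, hle⟩ : Indep (B.erase e0) ∧ (B.erase e0).card ≤ r - 1 := by
    rcases hB.1 with ⟨hne, _⟩ | ⟨_, h1, h2⟩
    · exact absurd he0B hne
    · exact ⟨h1, h2⟩
  refine ⟨hind, ?_⟩
  by_contra hne
  have hlt : (B.erase e0).card < r - 1 := by omega
  obtain ⟨g, hgE, hgI, hgind⟩ :=
    fe_ext_one subset_ground indep_aug hr_ex hind (by omega)
  have hge0 : g ≠ e0 := fun h => he0 (h ▸ hgE)
  have hgB : g ∉ B := fun h => hgI (Finset.mem_erase.mpr ⟨hge0, h⟩)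
  refine hB.2 g (Finset.mem_insert_of_mem hgE) hgB (Or.inr ⟨Finset.mem_insert_of_mem he0B, ?_, ?_⟩)
  · rw [Finset.erase_insert_of_ne hge0]
    exact hgind
  · rw [Finset.erase_insert_of_ne hge0, Finset.card_insert_of_notMem hgI]
    omega

/-- `e0` plus an independent set of cardinality `r - 1` is a base of the free
extension. -/
theorem fe_baseExt_insert
    (subset_ground : ∀ S, Indep S → S ⊆ E)
    (he0 : e0 ∉ E)
    {I : Finset α} (hI : Indep I) (hc : I.card = r - 1) :
    IsBaseOf (insert e0 E) (freeExtIndep Indep r e0) (insert e0 I) := by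
  have hIE : I ⊆ E := subset_ground I hI
  have he0I : e0 ∉ I := fun h => he0 (hIE h)
  constructor
  · refine Or.inr ⟨Finset.mem_insert_self _ _, ?_, ?_⟩
    · rw [Finset.erase_insert he0I]; exact hI
    · rw [Finset.erase_insert he0I]; omega
  · intro g hgE hgB hind
    have hge0 : g ≠ e0 := fun h => hgB (h ▸ Finset.mem_insert_self _ _)
    have hgI : g ∉ I := fun h => hgB (Finset.mem_insert_of_mem h)
    rcases hind with ⟨hne, _⟩ | ⟨_, _, hcard⟩
    · exact hne (Finset.mem_insert_of_mem (Finset.mem_insert_self _ _))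
    · rw [Finset.insert_comm, Finset.erase_insert (by
        intro h
        rcases Finset.mem_insert.mp h with h' | h'
        · exact hge0 h'.symm
        · exact he0I h'), Finset.card_insert_of_notMem hgI] at hcard
      omega

/-- Base orderability passes to independent sets of cardinality `r - 1`
(truncation). -/
theorem fe_trunc
    (subset_ground : ∀ S, Indep S → S ⊆ E)
    (indep_subset : ∀ ⦃S T : Finset α⦄, S ⊆ T → Indep T → Indep S)
    (indep_aug : ∀ ⦃S T : Finset α⦄, Indep S → Indep T → S.card < T.card →
      ∃ g ∈ T, g ∉ S ∧ Indep (insert g S))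
    (hr_le : ∀ S, Indep S → S.card ≤ r)
    (hr_ex : ∃ B, Indep B ∧ B.card = r)
    (hbo : BaseOrderable E Indep) (hr1 : 1 ≤ r)
    {I1 I2 : Finset α} (h1 : Indep I1) (h2 : Indep I2)
    (hc1 : I1.card = r - 1) (hc2 : I2.card = r - 1) :
    ∃ ν : α → α, Set.BijOn ν ↑I1 ↑I2 ∧
      ∀ x ∈ I1, Indep (insert (ν x) (I1.erase x)) ∧ Indep (insert x (I2.erase (ν x))) := by
  obtain ⟨a, haE, haI, hB1⟩ := fe_ext_one subset_ground indep_aug hr_ex h1 (by omega)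
  obtain ⟨b, hbE, hbI, hB2⟩ := fe_ext_one subset_ground indep_aug hr_ex h2 (by omega)
  have hB1card : (insert a I1).card = r := by
    rw [Finset.card_insert_of_notMem haI]; omega
  have hB2card : (insert b I2).card = r := by
    rw [Finset.card_insert_of_notMem hbI]; omega
  obtain ⟨μ, hbij, hexch⟩ := hbo _ _ (fe_base_of_card hr_le hB1 hB1card)
      (fe_base_of_card hr_le hB2 hB2card)
  obtain ⟨x0, hx0B, hx0⟩ := hbij.surjOn
    (by exact_mod_cast Finset.mem_insert_self b I2 : (b : α) ∈ (↑(insert b I2) : Set α))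
  have hx0B' : x0 ∈ insert a I1 := by exact_mod_cast hx0B
  -- the modified bijection
  refine ⟨fun x => if x = x0 then μ a else μ x, ⟨?_, ?_, ?_⟩, ?_⟩
  · -- MapsTo
    intro x hx
    have hxI : x ∈ I1 := by exact_mod_cast hx
    have hxB : x ∈ insert a I1 := Finset.mem_insert_of_mem hxI
    by_cases hxx0 : x = x0
    · subst hxx0
      have hxa : x ≠ a := fun h => haI (h ▸ hxI)
      have hμa : μ a ∈ insert b I2 := by
        exact_mod_cast hbij.mapsTo (by exact_mod_cast Finset.mem_insert_self a I1)
      have hμab : μ a ≠ b := by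
        intro h
        have haB : (a : α) ∈ (↑(insert a I1) : Set α) := by
          exact_mod_cast Finset.mem_insert_self a I1
        have heq : a = x := hbij.injOn haB (by exact_mod_cast hxB) (by rw [h, hx0])
        exact hxa heq.symm
      simp only [if_pos rfl]
      rcases Finset.mem_insert.mp hμa with h | h
      · exact absurd h hμab
      · exact_mod_cast h
    · have hμx : μ x ∈ insert b I2 := by
        exact_mod_cast hbij.mapsTo (by exact_mod_cast hxB)
      have hμxb : μ x ≠ b := by
        intro h
        exact hxx0 (hbij.injOn (by exact_mod_cast hxB) hx0B (by rw [hx0, h]))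
      simp only [if_neg hxx0]
      rcases Finset.mem_insert.mp hμx with h | h
      · exact absurd h hμxb
      · exact_mod_cast h
  · -- InjOn
    intro x hx y hy hxy
    have hxI : x ∈ I1 := by exact_mod_cast hx
    have hyI : y ∈ I1 := by exact_mod_cast hy
    have hxB : (x : α) ∈ (↑(insert a I1) : Set α) := by
      exact_mod_cast Finset.mem_insert_of_mem hxI
    have hyB : (y : α) ∈ (↑(insert a I1) : Set α) := by
      exact_mod_cast Finset.mem_insert_of_mem hyI
    have haB : (a : α) ∈ (↑(insert a I1) : Set α) := by
      exact_mod_cast Finset.mem_insert_self a I1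
    by_cases hxx0 : x = x0 <;> by_cases hyy0 : y = x0
    · rw [hxx0, hyy0]
    · exfalso
      simp only [if_pos hxx0, if_neg hyy0] at hxy
      have h := hbij.injOn haB hyB hxy
      rw [← h] at hyI
      exact haI hyI
    · exfalso
      simp only [if_neg hxx0, if_pos hyy0] at hxy
      have h := hbij.injOn haB hxB hxy.symm
      rw [← h] at hxI
      exact haI hxI
    · simp only [if_neg hxx0, if_neg hyy0] at hxy
      exact hbij.injOn hxB hyB hxy
  · -- SurjOn
    intro y hy
    have hyI : y ∈ I2 := by exact_mod_cast hy
    have hyB : (y : α) ∈ (↑(insert b I2) : Set α) := by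
      exact_mod_cast Finset.mem_insert_of_mem hyI
    obtain ⟨x, hxB, hxy⟩ := hbij.surjOn hyB
    have hxB' : x ∈ insert a I1 := by exact_mod_cast hxB
    have hyb : y ≠ b := fun h => hbI (h ▸ hyI)
    by_cases hxa : x = a
    · have hμay : μ a = y := by rw [← hxa]; exact hxy
      have hx0a : x0 ≠ a := by
        intro h
        rw [h] at hx0
        rw [hx0] at hμay
        exact hyb hμay.symm
      have hx0I : x0 ∈ I1 := by
        rcases Finset.mem_insert.mp hx0B' with h | h
        · exact absurd h hx0a
        · exact h
      refine ⟨x0, by exact_mod_cast hx0I, ?_⟩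
      simp only [if_pos rfl]
      exact hμay
    · have hxI : x ∈ I1 := by
        rcases Finset.mem_insert.mp hxB' with h | h
        · exact absurd h hxa
        · exact h
      have hxx0 : x ≠ x0 := by
        intro h
        rw [h, hx0] at hxy
        exact hyb hxy.symm
      refine ⟨x, by exact_mod_cast hxI, ?_⟩
      simp only [if_neg hxx0]
      exact hxy
  · -- exchange property
    intro x hxI
    have hxB : x ∈ insert a I1 := Finset.mem_insert_of_mem hxI
    by_cases hxx0 : x = x0
    · subst hxx0
      simp only [if_pos rfl]
      constructor
      · -- Indep (insert (μ a) (I1.erase x))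
        have h := (hexch a (Finset.mem_insert_self a I1)).1
        rw [Finset.erase_insert haI] at h
        exact indep_subset
          (Finset.insert_subset_insert _ (Finset.erase_subset _ _)) h
      · -- Indep (insert x (I2.erase (μ a)))
        have h := (hexch x hxB).2
        rw [hx0, Finset.erase_insert hbI] at h
        exact indep_subset
          (Finset.insert_subset_insert _ (Finset.erase_subset _ _)) h
    · simp only [if_neg hxx0]
      constructor
      · have h := (hexch x hxB).1
        exact indep_subset (Finset.insert_subset_insert _
          (Finset.erase_subset_erase _ (Finset.subset_insert a I1))) h
      · have h := (hexch x hxB).2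
        exact indep_subset (Finset.insert_subset_insert _
          (Finset.erase_subset_erase _ (Finset.subset_insert b I2))) h

end Aux

/-- A matroid is base-orderable if and only if its free extension is
base-orderable. -/
theorem stmt13 {α : Type*} [DecidableEq α]
    (E : Finset α) (Indep : Finset α → Prop)
    (subset_ground : ∀ S, Indep S → S ⊆ E)
    (indep_empty : Indep ∅)
    (indep_subset : ∀ ⦃S T : Finset α⦄, S ⊆ T → Indep T → Indep S)
    (indep_aug : ∀ ⦃S T : Finset α⦄, Indep S → Indep T → S.card < T.card →
      ∃ g ∈ T, g ∉ S ∧ Indep (insert g S))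
    (r : ℕ) (hr_le : ∀ S, Indep S → S.card ≤ r)
    (hr_ex : ∃ B, Indep B ∧ B.card = r)
    (e0 : α) (he0 : e0 ∉ E) :
    BaseOrderable E Indep ↔
      BaseOrderable (insert e0 E) (freeExtIndep Indep r e0) := by
  rcases Nat.eq_zero_or_pos r with hr0 | hr1
  · -- rank 0 : both sides hold unconditionally
    subst hr0
    have hBe : ∀ B : Finset α, IsBaseOf E Indep B → B = ∅ := fun B hB =>
      Finset.card_eq_zero.mp (Nat.le_zero.mp (hr_le B hB.1))
    have hsing : freeExtIndep Indep 0 e0 {e0} := by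
      refine Or.inr ⟨Finset.mem_singleton_self e0, ?_, ?_⟩
      · rw [Finset.erase_singleton]; exact indep_empty
      · rw [Finset.erase_singleton]; simp
    have hBe' : ∀ B : Finset α, IsBaseOf (insert e0 E) (freeExtIndep Indep 0 e0) B →
        B = {e0} := by
      intro B hB
      rcases hB.1 with ⟨hne, hind⟩ | ⟨hmem, hind, _⟩
      · exfalso
        have hB0 : B = ∅ := Finset.card_eq_zero.mp (Nat.le_zero.mp (hr_le B hind))
        subst hB0
        refine hB.2 e0 (Finset.mem_insert_self _ _) (Finset.notMem_empty e0) ?_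
        simpa using hsing
      · have h0 : B.erase e0 = ∅ :=
          Finset.card_eq_zero.mp (Nat.le_zero.mp (hr_le _ hind))
        have := Finset.insert_erase hmem
        rw [h0] at this
        simpa using this.symm
    constructor
    · intro _ B1 B2 hB1 hB2
      rw [hBe' B1 hB1, hBe' B2 hB2]
      refine ⟨id, by simpa using Set.bijOn_id _, ?_⟩
      intro x hx
      rw [Finset.mem_singleton.mp hx]
      rw [Finset.erase_singleton]
      constructor <;> simpa using hsing
    · intro _ B1 B2 hB1 hB2
      rw [hBe B1 hB1, hBe B2 hB2]
      refine ⟨id, by simpa using Set.bijOn_id (∅ : Set α), ?_⟩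
      intro x hx
      exact absurd hx (Finset.notMem_empty x)
  · constructor
    · -- forward direction
      intro hbo B1' B2' h1' h2'
      by_cases he1 : e0 ∈ B1' <;> by_cases he2 : e0 ∈ B2'
      · -- both contain e0
        obtain ⟨hI1, hc1⟩ := fe_baseExt_erase subset_ground indep_aug hr_ex he0 h1' he1
        obtain ⟨hI2, hc2⟩ := fe_baseExt_erase subset_ground indep_aug hr_ex he0 h2' he2
        set I1 := B1'.erase e0 with hI1def
        set I2 := B2'.erase e0 with hI2def
        have hB1eq : B1' = insert e0 I1 := (Finset.insert_erase he1).symm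
        have hB2eq : B2' = insert e0 I2 := (Finset.insert_erase he2).symm
        have he0I1 : e0 ∉ I1 := Finset.notMem_erase _ _
        have he0I2 : e0 ∉ I2 := Finset.notMem_erase _ _
        obtain ⟨ν, hbij, hexch⟩ := fe_trunc subset_ground indep_subset indep_aug hr_le
          hr_ex hbo hr1 hI1 hI2 hc1 hc2
        have hνE : ∀ x ∈ I1, ν x ∈ I2 := fun x hx => by
          exact_mod_cast hbij.mapsTo (by exact_mod_cast hx)
        have hνe0 : ∀ x ∈ I1, ν x ≠ e0 := fun x hx h =>
          he0 (subset_ground I2 hI2 (h ▸ hνE x hx))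
        refine ⟨fun x => if x = e0 then e0 else ν x, ⟨?_, ?_, ?_⟩, ?_⟩
        · intro x hx
          have hx' : x ∈ B1' := by exact_mod_cast hx
          by_cases hxe : x = e0
          · simp only [if_pos hxe]
            exact_mod_cast he2
          · simp only [if_neg hxe]
            have hxI : x ∈ I1 := Finset.mem_erase.mpr ⟨hxe, hx'⟩
            have := hνE x hxI
            rw [hB2eq]
            exact_mod_cast Finset.mem_insert_of_mem this
        · intro x hx y hy hxy
          have hx' : x ∈ B1' := by exact_mod_cast hx
          have hy' : y ∈ B1' := by exact_mod_cast hy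
          by_cases hxe : x = e0 <;> by_cases hye : y = e0
          · rw [hxe, hye]
          · exfalso
            simp only [if_pos hxe, if_neg hye] at hxy
            exact hνe0 y (Finset.mem_erase.mpr ⟨hye, hy'⟩) hxy.symm
          · exfalso
            simp only [if_neg hxe, if_pos hye] at hxy
            exact hνe0 x (Finset.mem_erase.mpr ⟨hxe, hx'⟩) hxy
          · simp only [if_neg hxe, if_neg hye] at hxy
            exact hbij.injOn (by exact_mod_cast Finset.mem_erase.mpr ⟨hxe, hx'⟩)
              (by exact_mod_cast Finset.mem_erase.mpr ⟨hye, hy'⟩) hxy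
        · intro y hy
          have hy' : y ∈ B2' := by exact_mod_cast hy
          by_cases hye : y = e0
          · exact ⟨e0, by exact_mod_cast he1, by simp [hye]⟩
          · have hyI : y ∈ I2 := Finset.mem_erase.mpr ⟨hye, hy'⟩
            obtain ⟨x, hx, hxy⟩ := hbij.surjOn (by exact_mod_cast hyI : (y:α) ∈ (↑I2 : Set α))
            have hxI : x ∈ I1 := by exact_mod_cast hx
            have hxe : x ≠ e0 := fun h => he0I1 (h ▸ hxI)
            refine ⟨x, by exact_mod_cast (Finset.mem_of_mem_erase hxI : x ∈ B1'), ?_⟩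
            simp only [if_neg hxe]
            exact hxy
        · intro x hx
          by_cases hxe : x = e0
          · simp only [if_pos hxe]
            rw [hxe]
            constructor
            · rw [Finset.insert_erase he1]; exact h1'.1
            · rw [Finset.insert_erase he2]; exact h2'.1
          · have hxI : x ∈ I1 := Finset.mem_erase.mpr ⟨hxe, hx⟩
            have hI1pos : 1 ≤ I1.card := Finset.card_pos.mpr ⟨x, hxI⟩
            have hνx := hνE x hxI
            have hI2pos : 1 ≤ I2.card := Finset.card_pos.mpr ⟨ν x, hνx⟩
            have hνxe : ν x ≠ e0 := hνe0 x hxI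
            simp only [if_neg hxe]
            constructor
            · -- Indep' (insert (ν x) (B1'.erase x))
              have heq : B1'.erase x = insert e0 (I1.erase x) := by
                rw [hB1eq, Finset.erase_insert_of_ne (Ne.symm hxe)]
              rw [heq]
              refine Or.inr ⟨Finset.mem_insert_of_mem (Finset.mem_insert_self _ _), ?_, ?_⟩
              · rw [Finset.insert_comm, Finset.erase_insert (by
                  intro h
                  rcases Finset.mem_insert.mp h with h' | h'
                  · exact hνxe h'.symm
                  · exact he0I1 (Finset.mem_of_mem_erase h'))]
                exact (hexch x hxI).1
              · rw [Finset.insert_comm, Finset.erase_insert (by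
                  intro h
                  rcases Finset.mem_insert.mp h with h' | h'
                  · exact hνxe h'.symm
                  · exact he0I1 (Finset.mem_of_mem_erase h'))]
                calc (insert (ν x) (I1.erase x)).card ≤ (I1.erase x).card + 1 :=
                      Finset.card_insert_le _ _
                  _ ≤ r - 1 := by
                      rw [Finset.card_erase_of_mem hxI]
                      omega
            · -- Indep' (insert x (B2'.erase (ν x)))
              have heq : B2'.erase (ν x) = insert e0 (I2.erase (ν x)) := by
                rw [hB2eq, Finset.erase_insert_of_ne (Ne.symm hνxe)]
              rw [heq]
              refine Or.inr ⟨Finset.mem_insert_of_mem (Finset.mem_insert_self _ _), ?_, ?_⟩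
              · rw [Finset.insert_comm, Finset.erase_insert (by
                  intro h
                  rcases Finset.mem_insert.mp h with h' | h'
                  · exact hxe h'.symm
                  · exact he0I2 (Finset.mem_of_mem_erase h'))]
                exact (hexch x hxI).2
              · rw [Finset.insert_comm, Finset.erase_insert (by
                  intro h
                  rcases Finset.mem_insert.mp h with h' | h'
                  · exact hxe h'.symm
                  · exact he0I2 (Finset.mem_of_mem_erase h'))]
                calc (insert x (I2.erase (ν x))).card ≤ (I2.erase (ν x)).card + 1 :=
                      Finset.card_insert_le _ _
                  _ ≤ r - 1 := by
                      rw [Finset.card_erase_of_mem hνx]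
                      omega
      · -- e0 ∈ B1', e0 ∉ B2'
        obtain ⟨hI1, hc1⟩ := fe_baseExt_erase subset_ground indep_aug hr_ex he0 h1' he1
        set I1 := B1'.erase e0 with hI1def
        have hB1eq : B1' = insert e0 I1 := (Finset.insert_erase he1).symm
        have he0I1 : e0 ∉ I1 := Finset.notMem_erase _ _
        have hB2 : IsBaseOf E Indep B2' := fe_base_of_baseExt he0 h2' he2
        have hB2c : B2'.card = r := fe_base_card subset_ground indep_aug hr_le hr_ex hB2
        obtain ⟨a, haE, haI, hB1i⟩ :=
          fe_ext_one subset_ground indep_aug hr_ex hI1 (by omega)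
        have hB1c : (insert a I1).card = r := by
          rw [Finset.card_insert_of_notMem haI]; omega
        obtain ⟨μ, hbij, hexch⟩ := hbo _ _ (fe_base_of_card hr_le hB1i hB1c) hB2
        have hμE : ∀ x ∈ insert a I1, μ x ∈ B2' := fun x hx => by
          exact_mod_cast hbij.mapsTo (by exact_mod_cast hx)
        have hB2E : B2' ⊆ E := subset_ground _ hB2.1
        refine ⟨fun x => if x = e0 then μ a else μ x, ⟨?_, ?_, ?_⟩, ?_⟩
        · intro x hx
          have hx' : x ∈ B1' := by exact_mod_cast hx
          by_cases hxe : x = e0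
          · simp only [if_pos hxe]
            exact_mod_cast hμE a (Finset.mem_insert_self _ _)
          · simp only [if_neg hxe]
            exact_mod_cast hμE x (Finset.mem_insert_of_mem (Finset.mem_erase.mpr ⟨hxe, hx'⟩))
        · intro x hx y hy hxy
          have hx' : x ∈ B1' := by exact_mod_cast hx
          have hy' : y ∈ B1' := by exact_mod_cast hy
          have hmemB : ∀ z, z ∈ B1' → z ≠ e0 → (z : α) ∈ (↑(insert a I1) : Set α) :=
            fun z hz hze => by
              exact_mod_cast Finset.mem_insert_of_mem (Finset.mem_erase.mpr ⟨hze, hz⟩)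
          have haB : (a : α) ∈ (↑(insert a I1) : Set α) := by
            exact_mod_cast Finset.mem_insert_self a I1
          by_cases hxe : x = e0 <;> by_cases hye : y = e0
          · rw [hxe, hye]
          · exfalso
            simp only [if_pos hxe, if_neg hye] at hxy
            have := hbij.injOn haB (hmemB y hy' hye) hxy
            exact haI (this ▸ (Finset.mem_erase.mpr ⟨hye, hy'⟩ : y ∈ I1))
          · exfalso
            simp only [if_neg hxe, if_pos hye] at hxy
            have := hbij.injOn haB (hmemB x hx' hxe) hxy.symm
            exact haI (this ▸ (Finset.mem_erase.mpr ⟨hxe, hx'⟩ : x ∈ I1))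
          · simp only [if_neg hxe, if_neg hye] at hxy
            exact hbij.injOn (hmemB x hx' hxe) (hmemB y hy' hye) hxy
        · intro y hy
          obtain ⟨x, hx, hxy⟩ := hbij.surjOn hy
          have hx' : x ∈ insert a I1 := by exact_mod_cast hx
          by_cases hxa : x = a
          · refine ⟨e0, by exact_mod_cast he1, ?_⟩
            simp only [if_pos rfl]
            rw [← hxa]; exact hxy
          · have hxI : x ∈ I1 := by
              rcases Finset.mem_insert.mp hx' with h | h
              · exact absurd h hxa
              · exact h
            have hxe : x ≠ e0 := fun h => he0I1 (h ▸ hxI)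
            refine ⟨x, by exact_mod_cast (Finset.mem_of_mem_erase hxI : x ∈ B1'), ?_⟩
            simp only [if_neg hxe]
            exact hxy
        · intro x hx
          by_cases hxe : x = e0
          · simp only [if_pos hxe]
            rw [hxe]
            have hμaE : μ a ∈ B2' := hμE a (Finset.mem_insert_self _ _)
            have hμae0 : μ a ≠ e0 := fun h => he0 (hB2E (h ▸ hμaE))
            constructor
            · -- Indep' (insert (μ a) (B1'.erase e0)) = insert (μ a) I1
              refine Or.inl ⟨?_, ?_⟩
              · intro h
                rcases Finset.mem_insert.mp h with h' | h'
                · exact hμae0 h'.symm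
                · exact he0I1 h'
              · have h := (hexch a (Finset.mem_insert_self a I1)).1
                rw [Finset.erase_insert haI] at h
                exact h
            · -- Indep' (insert e0 (B2'.erase (μ a)))
              have he0B2e : e0 ∉ B2'.erase (μ a) := fun h =>
                he2 (Finset.mem_of_mem_erase h)
              refine Or.inr ⟨Finset.mem_insert_self _ _, ?_, ?_⟩
              · rw [Finset.erase_insert he0B2e]
                exact indep_subset (Finset.erase_subset _ _) hB2.1
              · rw [Finset.erase_insert he0B2e, Finset.card_erase_of_mem hμaE]
                omega
          · have hxI : x ∈ I1 := Finset.mem_erase.mpr ⟨hxe, hx⟩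
            have hI1pos : 1 ≤ I1.card := Finset.card_pos.mpr ⟨x, hxI⟩
            have hxB : x ∈ insert a I1 := Finset.mem_insert_of_mem hxI
            have hμxE : μ x ∈ B2' := hμE x hxB
            have hμxe0 : μ x ≠ e0 := fun h => he0 (hB2E (h ▸ hμxE))
            simp only [if_neg hxe]
            constructor
            · -- Indep' (insert (μ x) (B1'.erase x))
              have heq : B1'.erase x = insert e0 (I1.erase x) := by
                rw [hB1eq, Finset.erase_insert_of_ne (Ne.symm hxe)]
              rw [heq]
              refine Or.inr ⟨Finset.mem_insert_of_mem (Finset.mem_insert_self _ _), ?_, ?_⟩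
              all_goals rw [Finset.insert_comm, Finset.erase_insert (by
                  intro h
                  rcases Finset.mem_insert.mp h with h' | h'
                  · exact hμxe0 h'.symm
                  · exact he0I1 (Finset.mem_of_mem_erase h'))]
              · exact indep_subset (Finset.insert_subset_insert _
                  (Finset.erase_subset_erase _ (Finset.subset_insert a I1)))
                  (hexch x hxB).1
              · calc (insert (μ x) (I1.erase x)).card ≤ (I1.erase x).card + 1 :=
                      Finset.card_insert_le _ _
                  _ ≤ r - 1 := by
                      rw [Finset.card_erase_of_mem hxI]; omega
            · -- Indep' (insert x (B2'.erase (μ x)))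
              refine Or.inl ⟨?_, (hexch x hxB).2⟩
              intro h
              rcases Finset.mem_insert.mp h with h' | h'
              · exact hxe h'.symm
              · exact he2 (Finset.mem_of_mem_erase h')
      · -- e0 ∉ B1', e0 ∈ B2'
        obtain ⟨hI2, hc2⟩ := fe_baseExt_erase subset_ground indep_aug hr_ex he0 h2' he2
        set I2 := B2'.erase e0 with hI2def
        have hB2eq : B2' = insert e0 I2 := (Finset.insert_erase he2).symm
        have he0I2 : e0 ∉ I2 := Finset.notMem_erase _ _
        have hB1 : IsBaseOf E Indep B1' := fe_base_of_baseExt he0 h1' he1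
        have hB1c : B1'.card = r := fe_base_card subset_ground indep_aug hr_le hr_ex hB1
        obtain ⟨b, hbE, hbI, hB2i⟩ :=
          fe_ext_one subset_ground indep_aug hr_ex hI2 (by omega)
        have hB2c : (insert b I2).card = r := by
          rw [Finset.card_insert_of_notMem hbI]; omega
        obtain ⟨μ, hbij, hexch⟩ := hbo _ _ hB1 (fe_base_of_card hr_le hB2i hB2c)
        obtain ⟨x0, hx0B, hx0⟩ := hbij.surjOn
          (by exact_mod_cast Finset.mem_insert_self b I2 : (b:α) ∈ (↑(insert b I2) : Set α))
        have hx0B' : x0 ∈ B1' := by exact_mod_cast hx0B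
        have hB1E : B1' ⊆ E := subset_ground _ hB1.1
        have hμI2 : ∀ x ∈ B1', x ≠ x0 → μ x ∈ I2 := by
          intro x hx hxx0
          have hμx : μ x ∈ insert b I2 := by
            exact_mod_cast hbij.mapsTo (by exact_mod_cast hx)
          rcases Finset.mem_insert.mp hμx with h | h
          · exact absurd (hbij.injOn (by exact_mod_cast hx) hx0B (by rw [hx0, h])) hxx0
          · exact h
        refine ⟨fun x => if x = x0 then e0 else μ x, ⟨?_, ?_, ?_⟩, ?_⟩
        · intro x hx
          have hx' : x ∈ B1' := by exact_mod_cast hx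
          by_cases hxx0 : x = x0
          · simp only [if_pos hxx0]
            exact_mod_cast he2
          · simp only [if_neg hxx0]
            exact_mod_cast Finset.mem_of_mem_erase (hμI2 x hx' hxx0)
        · intro x hx y hy hxy
          have hx' : x ∈ B1' := by exact_mod_cast hx
          have hy' : y ∈ B1' := by exact_mod_cast hy
          by_cases hxx0 : x = x0 <;> by_cases hyy0 : y = x0
          · rw [hxx0, hyy0]
          · exfalso
            simp only [if_pos hxx0, if_neg hyy0] at hxy
            have hmy : μ y ∈ I2 := hμI2 y hy' hyy0
            rw [← hxy] at hmy
            exact he0I2 hmy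
          · exfalso
            simp only [if_neg hxx0, if_pos hyy0] at hxy
            have hmx : μ x ∈ I2 := hμI2 x hx' hxx0
            rw [hxy] at hmx
            exact he0I2 hmx
          · simp only [if_neg hxx0, if_neg hyy0] at hxy
            exact hbij.injOn hx hy hxy
        · intro y hy
          have hy' : y ∈ B2' := by exact_mod_cast hy
          by_cases hye : y = e0
          · exact ⟨x0, by exact_mod_cast hx0B', by simp [hye]⟩
          · have hyI : y ∈ I2 := Finset.mem_erase.mpr ⟨hye, hy'⟩
            obtain ⟨x, hx, hxy⟩ := hbij.surjOn
              (by exact_mod_cast Finset.mem_insert_of_mem hyI :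
                (y:α) ∈ (↑(insert b I2) : Set α))
            have hxx0 : x ≠ x0 := by
              intro h
              rw [h, hx0] at hxy
              rw [← hxy] at hyI
              exact hbI hyI
            refine ⟨x, hx, ?_⟩
            simp only [if_neg hxx0]
            exact hxy
        · intro x hx
          by_cases hxx0 : x = x0
          · simp only [if_pos hxx0]
            constructor
            · -- Indep' (insert e0 (B1'.erase x))
              have he0B1e : e0 ∉ B1'.erase x := fun h => he1 (Finset.mem_of_mem_erase h)
              refine Or.inr ⟨Finset.mem_insert_self _ _, ?_, ?_⟩
              · rw [Finset.erase_insert he0B1e]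
                exact indep_subset (Finset.erase_subset _ _) hB1.1
              · rw [Finset.erase_insert he0B1e, Finset.card_erase_of_mem hx]
                omega
            · -- Indep' (insert x (B2'.erase e0)) = insert x I2
              refine Or.inl ⟨?_, ?_⟩
              · intro h
                rcases Finset.mem_insert.mp h with h' | h'
                · exact he1 (h' ▸ hx)
                · exact he0I2 h'
              · have h := (hexch x hx).2
                have hμxb : μ x = b := by rw [hxx0]; exact hx0
                rw [hμxb, Finset.erase_insert hbI] at h
                exact h
          · have hμx : μ x ∈ I2 := hμI2 x hx hxx0
            have hI2pos : 1 ≤ I2.card := Finset.card_pos.mpr ⟨μ x, hμx⟩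
            have hμxe0 : μ x ≠ e0 := fun h => he0I2 (h ▸ hμx)
            have hxe0 : x ≠ e0 := fun h => he1 (h ▸ hx)
            simp only [if_neg hxx0]
            constructor
            · -- Indep' (insert (μ x) (B1'.erase x))
              refine Or.inl ⟨?_, ?_⟩
              · intro h
                rcases Finset.mem_insert.mp h with h' | h'
                · exact hμxe0 h'.symm
                · exact he1 (Finset.mem_of_mem_erase h')
              · exact indep_subset (Finset.insert_subset_insert _
                  (Finset.erase_subset_erase _ (Finset.Subset.refl _))) (hexch x hx).1
            · -- Indep' (insert x (B2'.erase (μ x)))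
              have heq : B2'.erase (μ x) = insert e0 (I2.erase (μ x)) := by
                rw [hB2eq, Finset.erase_insert_of_ne (Ne.symm hμxe0)]
              rw [heq]
              refine Or.inr ⟨Finset.mem_insert_of_mem (Finset.mem_insert_self _ _), ?_, ?_⟩
              all_goals rw [Finset.insert_comm, Finset.erase_insert (by
                  intro h
                  rcases Finset.mem_insert.mp h with h' | h'
                  · exact hxe0 h'.symm
                  · exact he0I2 (Finset.mem_of_mem_erase h'))]
              · exact indep_subset (Finset.insert_subset_insert _
                  (Finset.erase_subset_erase _ (Finset.subset_insert b I2)))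
                  (hexch x hx).2
              · calc (insert x (I2.erase (μ x))).card ≤ (I2.erase (μ x)).card + 1 :=
                      Finset.card_insert_le _ _
                  _ ≤ r - 1 := by
                      rw [Finset.card_erase_of_mem hμx]; omega
      · -- neither contains e0
        have hB1 : IsBaseOf E Indep B1' := fe_base_of_baseExt he0 h1' he1
        have hB2 : IsBaseOf E Indep B2' := fe_base_of_baseExt he0 h2' he2
        obtain ⟨μ, hbij, hexch⟩ := hbo _ _ hB1 hB2
        have hB1E : B1' ⊆ E := subset_ground _ hB1.1
        have hB2E : B2' ⊆ E := subset_ground _ hB2.1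
        refine ⟨μ, hbij, fun x hx => ?_⟩
        have hμx : μ x ∈ B2' := by exact_mod_cast hbij.mapsTo (by exact_mod_cast hx)
        constructor
        · refine Or.inl ⟨?_, (hexch x hx).1⟩
          intro h
          rcases Finset.mem_insert.mp h with h' | h'
          · exact he0 (hB2E (h' ▸ hμx))
          · exact he1 (Finset.mem_of_mem_erase h')
        · refine Or.inl ⟨?_, (hexch x hx).2⟩
          intro h
          rcases Finset.mem_insert.mp h with h' | h'
          · exact he0 (hB1E (h' ▸ hx))
          · exact he2 (Finset.mem_of_mem_erase h')
    · -- reverse direction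
      intro hbo' B1 B2 h1 h2
      obtain ⟨μ, hbij, hexch⟩ := hbo' B1 B2
        (fe_baseExt_of_base subset_ground indep_aug hr_le hr_ex he0 hr1 h1)
        (fe_baseExt_of_base subset_ground indep_aug hr_le hr_ex he0 hr1 h2)
      have hB1E : B1 ⊆ E := subset_ground _ h1.1
      have hB2E : B2 ⊆ E := subset_ground _ h2.1
      refine ⟨μ, hbij, fun x hx => ?_⟩
      have hμx : μ x ∈ B2 := by exact_mod_cast hbij.mapsTo (by exact_mod_cast hx)
      constructor
      · rcases (hexch x hx).1 with ⟨_, h⟩ | ⟨hmem, _, _⟩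
        · exact h
        · exfalso
          rcases Finset.mem_insert.mp hmem with h' | h'
          · exact he0 (hB2E (h' ▸ hμx))
          · exact he0 (hB1E (Finset.mem_of_mem_erase h'))
      · rcases (hexch x hx).2 with ⟨_, h⟩ | ⟨hmem, _, _⟩
        · exact h
        · exfalso
          rcases Finset.mem_insert.mp hmem with h' | h'
          · exact he0 (hB1E (h' ▸ hx))
          · exact he0 (hB2E (Finset.mem_of_mem_erase h'))
end

section
/- Let agents have binary additive valuations and a common matroid constraint. Let X be a complete feasible allocation maximizing the sum of utilities, in which agent i envies agent j, and let μ: X_i → X_j be a feasible-exchange bijection. Then there exists g_i ∈ X_i with v_i(g_i) = v_j(g_i) = 0 and v_i(μ(g_i)) = v_j(μ(g_i)) = 1. -/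
/-- Smart-swap lemma: with binary additive valuations and a common matroid constraint,
in a welfare-maximizing complete feasible allocation in which agent `i` envies agent `j`,
any feasible-exchange bijection `μ : X i ↔ X j` admits an item `g ∈ X i` with
`v i g = v j g = 0` and `v i (μ g) = v j (μ g) = 1`. -/
theorem stmt15 {α : Type*} [DecidableEq α] {n : ℕ}
    (M : Finset α) (Indep : Finset α → Prop) (v : Fin n → α → ℕ)
    (hbin : ∀ i g, v i g ≤ 1)
    (X : Fin n → Finset α)
    (hdisj : ∀ i j, i ≠ j → Disjoint (X i) (X j))
    (hcomp : Finset.univ.biUnion X = M)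
    (hfeas : ∀ i, Indep (X i))
    (hswm : ∀ X' : Fin n → Finset α,
      (∀ i j, i ≠ j → Disjoint (X' i) (X' j)) →
      Finset.univ.biUnion X' = M →
      (∀ i, Indep (X' i)) →
      (∑ t, (X' t).sum (v t)) ≤ ∑ t, (X t).sum (v t))
    (i j : Fin n) (hij : i ≠ j)
    (henvy : (X i).sum (v i) < (X j).sum (v i))
    (μ : α → α)
    (hbij : Set.BijOn μ (X i) (X j))
    (hfe : ∀ x ∈ X i,
      Indep (insert (μ x) ((X i).erase x)) ∧ Indep (insert x ((X j).erase (μ x)))) :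
    ∃ g ∈ X i, v i g = 0 ∧ v j g = 0 ∧ v i (μ g) = 1 ∧ v j (μ g) = 1 := by
  classical
  have hdij := hdisj i j hij
  have himg : (X i).image μ = X j := by
    apply Finset.coe_injective
    rw [Finset.coe_image]
    exact hbij.image_eq
  have hsum : (X j).sum (v i) = ∑ t ∈ X i, v i (μ t) := by
    rw [← himg, Finset.sum_image (fun a ha b hb h =>
      hbij.injOn (Finset.mem_coe.mpr ha) (Finset.mem_coe.mpr hb) h)]
  rw [hsum] at henvy
  obtain ⟨x, hx, hlt⟩ := Finset.exists_lt_of_sum_lt henvy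
  have hb1 := hbin i (μ x)
  have hvix : v i x = 0 := by omega
  have hviμ : v i (μ x) = 1 := by omega
  have hμx : μ x ∈ X j := hbij.mapsTo (Finset.mem_coe.mpr hx)
  have hxnj : x ∉ X j := Finset.disjoint_left.mp hdij hx
  have hμxni : μ x ∉ X i := Finset.disjoint_right.mp hdij hμx
  have hne : x ≠ μ x := fun h => hxnj (h ▸ hμx)
  by_contra hcon
  push_neg at hcon
  have hge : v j (μ x) ≤ v j x := by
    by_cases h : v j x = 0
    · have h4 := hcon x hx hvix h hviμ
      have h5 := hbin j (μ x)
      omega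
    · have h5 := hbin j x
      have h6 := hbin j (μ x)
      omega
  set A := insert (μ x) ((X i).erase x) with hA
  set B := insert x ((X j).erase (μ x)) with hB
  set X' : Fin n → Finset α := fun k => if k = i then A else if k = j then B else X k with hX'
  have hX'i : X' i = A := by simp [X']
  have hX'j : X' j = B := by simp [X', hij.symm]
  have hX'k : ∀ k, k ≠ i → k ≠ j → X' k = X k := by
    intro k h1 h2; simp [X', h1, h2]
  have hmemA : ∀ a, a ∈ A ↔ a = μ x ∨ (a ≠ x ∧ a ∈ X i) := by
    intro a; simp [hA, Finset.mem_insert, Finset.mem_erase]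
  have hmemB : ∀ a, a ∈ B ↔ a = x ∨ (a ≠ μ x ∧ a ∈ X j) := by
    intro a; simp [hB, Finset.mem_insert, Finset.mem_erase]
  have hdAB : Disjoint A B := by
    rw [Finset.disjoint_left]
    intro a ha hb
    rw [hmemA] at ha
    rw [hmemB] at hb
    rcases ha with rfl | ⟨hax, haXi⟩
    · rcases hb with h | ⟨h, _⟩
      · exact hne h.symm
      · exact h rfl
    · rcases hb with rfl | ⟨_, haXj⟩
      · exact hax rfl
      · exact Finset.disjoint_left.mp hdij haXi haXj
  have hdA : ∀ l, l ≠ i → l ≠ j → Disjoint A (X l) := by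
    intro l h1 h2
    rw [Finset.disjoint_left]
    intro a ha hal
    rw [hmemA] at ha
    rcases ha with rfl | ⟨_, haXi⟩
    · exact Finset.disjoint_left.mp (hdisj j l (Ne.symm h2)) hμx hal
    · exact Finset.disjoint_left.mp (hdisj i l (Ne.symm h1)) haXi hal
  have hdB : ∀ l, l ≠ i → l ≠ j → Disjoint B (X l) := by
    intro l h1 h2
    rw [Finset.disjoint_left]
    intro a ha hal
    rw [hmemB] at ha
    rcases ha with rfl | ⟨_, haXj⟩
    · exact Finset.disjoint_left.mp (hdisj i l (Ne.symm h1)) hx hal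
    · exact Finset.disjoint_left.mp (hdisj j l (Ne.symm h2)) haXj hal
  have hd' : ∀ k l, k ≠ l → Disjoint (X' k) (X' l) := by
    intro k l hkl
    by_cases hki : k = i
    · subst hki
      by_cases hlj : l = j
      · subst hlj; rw [hX'i, hX'j]; exact hdAB
      · rw [hX'i, hX'k l (Ne.symm hkl) hlj]; exact hdA l (Ne.symm hkl) hlj
    · by_cases hkj : k = j
      · subst hkj
        by_cases hli : l = i
        · subst hli; rw [hX'i, hX'j]; exact hdAB.symm
        · rw [hX'j, hX'k l hli (Ne.symm hkl)]; exact hdB l hli (Ne.symm hkl)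
      · by_cases hli : l = i
        · subst hli; rw [hX'i, hX'k k hkl hkj]; exact (hdA k hkl hkj).symm
        · by_cases hlj : l = j
          · subst hlj; rw [hX'j, hX'k k hki hkl]; exact (hdB k hki hkl).symm
          · rw [hX'k k hki hkj, hX'k l hli hlj]; exact hdisj k l hkl
  have hcomp' : Finset.univ.biUnion X' = M := by
    rw [← hcomp]
    ext a
    simp only [Finset.mem_biUnion, Finset.mem_univ, true_and]
    constructor
    · rintro ⟨k, hk⟩
      by_cases hki : k = i
      · rw [hki, hX'i, hmemA] at hk
        rcases hk with rfl | ⟨_, h⟩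
        · exact ⟨j, hμx⟩
        · exact ⟨i, h⟩
      · by_cases hkj : k = j
        · rw [hkj, hX'j, hmemB] at hk
          rcases hk with rfl | ⟨_, h⟩
          · exact ⟨i, hx⟩
          · exact ⟨j, h⟩
        · exact ⟨k, by rwa [hX'k k hki hkj] at hk⟩
    · rintro ⟨k, hk⟩
      by_cases hki : k = i
      · rw [hki] at hk
        by_cases hax : a = x
        · exact ⟨j, by rw [hX'j, hmemB]; exact Or.inl hax⟩
        · exact ⟨i, by rw [hX'i, hmemA]; exact Or.inr ⟨hax, hk⟩⟩
      · by_cases hkj : k = j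
        · rw [hkj] at hk
          by_cases haμ : a = μ x
          · exact ⟨i, by rw [hX'i, hmemA]; exact Or.inl haμ⟩
          · exact ⟨j, by rw [hX'j, hmemB]; exact Or.inr ⟨haμ, hk⟩⟩
        · exact ⟨k, by rw [hX'k k hki hkj]; exact hk⟩
  have hfeas' : ∀ k, Indep (X' k) := by
    intro k
    by_cases hki : k = i
    · subst hki; rw [hX'i, hA]; exact (hfe x hx).1
    · by_cases hkj : k = j
      · subst hkj; rw [hX'j, hB]; exact (hfe x hx).2
      · rw [hX'k k hki hkj]; exact hfeas k
  have hle := hswm X' hd' hcomp' hfeas'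
  have hkey : ∀ f : Fin n → ℕ, ∑ t, f t =
      f i + f j + ∑ t ∈ (Finset.univ.erase i).erase j, f t := by
    intro f
    rw [← Finset.add_sum_erase _ f (Finset.mem_univ i),
        ← Finset.add_sum_erase _ f (Finset.mem_erase.mpr ⟨hij.symm, Finset.mem_univ j⟩)]
    ring
  have hrest : ∑ t ∈ (Finset.univ.erase i).erase j, (X' t).sum (v t)
      = ∑ t ∈ (Finset.univ.erase i).erase j, (X t).sum (v t) := by
    apply Finset.sum_congr rfl
    intro t ht
    rw [Finset.mem_erase, Finset.mem_erase] at ht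
    rw [hX'k t ht.2.1 ht.1]
  have hsAi : (X' i).sum (v i) = (X i).sum (v i) + 1 := by
    rw [hX'i, hA, Finset.sum_insert (fun h => hμxni (Finset.mem_of_mem_erase h)),
        Finset.sum_erase _ hvix, hviμ, add_comm]
  have hsBj : (X' j).sum (v j) + v j (μ x) = (X j).sum (v j) + v j x := by
    rw [hX'j, hB, Finset.sum_insert (fun h => hxnj (Finset.mem_of_mem_erase h)),
        ← Finset.add_sum_erase _ (v j) hμx]
    ring
  rw [hkey (fun t => (X' t).sum (v t)), hkey (fun t => (X t).sum (v t)), hrest] at hle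
  omega
end
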